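/- arXiv:2411.01002 — 8 statements merged into one kernel-verified Lean document; each statement's English description precedes it below -/
import Mathlib

section
/- Locally minimal distance implies linear check soundness: Let r₁, …, r_m ∈ F₂ⁿ and let W be their F₂-span. Call v ∈ W locally minimal if wt(v + rⱼ) ≥ wt(v) for every j = 1, …, m, where wt denotes Hamming weight. Suppose d_c > 0 is such that every nonzero locally minimal element of W has Hamming weight at least d_c. Then every v ∈ W with wt(v) = M < d_c is the F₂-sum of at most M distinct vectors among r₁, …, r_m. -/
/-- Hamming weight of a vector over `F₂`. -/
def hamWt {n : ℕ} (v : Fin n → ZMod 2) : ℕ :=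
  (Finset.univ.filter fun i => v i ≠ 0).card

/-- `v` is locally minimal with respect to the checks `r j`: adding any single check
does not decrease the Hamming weight. -/
def LocallyMinimal {n m : ℕ} (r : Fin m → (Fin n → ZMod 2)) (v : Fin n → ZMod 2) : Prop :=
  ∀ j : Fin m, hamWt v ≤ hamWt (v + r j)

/-- Locally minimal distance implies linear check soundness.  If every
nonzero locally minimal element of `W = span(r₁,…,r_m)` has Hamming weight at least
`d_c`, then every `v ∈ W` with `wt(v) = M < d_c` is the `F₂`-sum of at most `M`
distinct vectors among `r₁,…,r_m`. -/
theorem locally_minimal_distance_implies_linear_check_soundness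
    (n m : ℕ) (r : Fin m → (Fin n → ZMod 2)) (dc : ℝ) (hdc : 0 < dc)
    (hmin : ∀ v ∈ Submodule.span (ZMod 2) (Set.range r),
      v ≠ 0 → LocallyMinimal r v → dc ≤ (hamWt v : ℝ)) :
    ∀ v ∈ Submodule.span (ZMod 2) (Set.range r), (hamWt v : ℝ) < dc →
      ∃ T : Finset (Fin m), v = ∑ j ∈ T, r j ∧ T.card ≤ hamWt v := by
  have self_add : ∀ x : Fin n → ZMod 2, x + x = 0 := fun x =>
    funext fun i => by simpa using CharTwo.add_self_eq_zero (x i)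
  have key : ∀ M : ℕ, ∀ v ∈ Submodule.span (ZMod 2) (Set.range r),
      hamWt v = M → (M : ℝ) < dc →
      ∃ T : Finset (Fin m), v = ∑ j ∈ T, r j ∧ T.card ≤ M := by
    intro M
    induction M using Nat.strong_induction_on with
    | _ M ih =>
      intro v hv hM hlt
      by_cases hv0 : v = 0
      · exact ⟨∅, by simp [hv0], by simp⟩
      · have hnlm : ¬ LocallyMinimal r v := by
          intro h
          have := hmin v hv hv0 h
          rw [hM] at this; linarith
        rw [LocallyMinimal] at hnlm
        push_neg at hnlm
        obtain ⟨j, hj⟩ := hnlm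
        set w := v + r j with hw
        have hwspan : w ∈ Submodule.span (ZMod 2) (Set.range r) :=
          Submodule.add_mem _ hv (Submodule.subset_span ⟨j, rfl⟩)
        have hwlt : hamWt w < M := by omega
        have hwlt' : (hamWt w : ℝ) < dc := by
          calc (hamWt w : ℝ) ≤ M := by exact_mod_cast hwlt.le
          _ < dc := hlt
        obtain ⟨T, hT, hcard⟩ := ih (hamWt w) hwlt w hwspan rfl hwlt'
        have hvw : v = w + r j := by
          rw [hw, add_assoc, self_add, add_zero]
        by_cases hjT : j ∈ T
        · refine ⟨T.erase j, ?_, ?_⟩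
          · have hsum : ∑ k ∈ T, r k = r j + ∑ k ∈ T.erase j, r k :=
              (Finset.add_sum_erase _ _ hjT).symm
            rw [hvw, hT, hsum, add_comm (r j), add_assoc, self_add, add_zero]
          · calc (T.erase j).card ≤ T.card := Finset.card_erase_le
            _ ≤ hamWt w := hcard
            _ ≤ M := hwlt.le
        · refine ⟨insert j T, ?_, ?_⟩
          · rw [Finset.sum_insert hjT, hvw, hT, add_comm]
          · rw [Finset.card_insert_of_notMem hjT]
            omega
  intro v hv hlt
  exact key (hamWt v) v hv rfl hlt
end

section
/- Boosting check soundness via linear check expansion: Let a stabilizer code have the property that every stabilizer of weight M < d_c is the F₂-sum of at most F(M) distinct checks, where F is an increasing function with F(M) < d'_c for every M < d_c, and suppose the code has (d'_c, η)-linear-check-expansion for some η > 0. Then every stabilizer of weight M < d_c is the F₂-sum of at most M/η distinct checks; that is, the code has (d_c, f)-check-soundness with f(M) = M/η. -/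
/-- Support of a Pauli operator `(x, z)` on `n` qubits. -/
def pSupp {n : ℕ} (p : (Fin n → ZMod 2) × (Fin n → ZMod 2)) : Finset (Fin n) :=
  Finset.univ.filter fun i => p.1 i ≠ 0 ∨ p.2 i ≠ 0

/-- Weight of a Pauli operator. -/
def pWeight {n : ℕ} (p : (Fin n → ZMod 2) × (Fin n → ZMod 2)) : ℕ := (pSupp p).card

/-- Symplectic form deciding (anti)commutation of two Pauli operators. -/
def sympl {n : ℕ} (p q : (Fin n → ZMod 2) × (Fin n → ZMod 2)) : ZMod 2 :=
  ∑ i, (p.1 i * q.2 i + q.1 i * p.2 i)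

/-- Boosting check soundness via linear check expansion.  If every
stabilizer of weight `M < d_c` is an `F₂`-sum of at most `F(M)` distinct checks, where
the increasing function `F` satisfies `F(M) < d'_c` for all `M < d_c`, and the code has
`(d'_c, η)`-linear-check-expansion, then every stabilizer of weight `M < d_c` is an
`F₂`-sum of at most `M/η` distinct checks. -/
theorem check_soundness_boosted_by_expansion
    (n m : ℕ) (C : Fin m → (Fin n → ZMod 2) × (Fin n → ZMod 2))
    (hcomm : ∀ j j' : Fin m, sympl (C j) (C j') = 0)
    (dc dc' η : ℝ) (hdc : 0 < dc) (hdc' : 0 < dc') (hη : 0 < η)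
    (F : ℝ → ℝ) (hF : MonotoneOn F (Set.Ici 0))
    (hFdc : ∀ M : ℝ, M < dc → F M < dc')
    (hsound : ∀ T : Finset (Fin m), ((pWeight (∑ j ∈ T, C j) : ℝ) < dc) →
      ∃ T' : Finset (Fin m), (∑ j ∈ T', C j) = ∑ j ∈ T, C j ∧
        (T'.card : ℝ) ≤ F (pWeight (∑ j ∈ T, C j)))
    (hexp : ∀ T : Finset (Fin m), ((T.card : ℝ) < dc') →
      η * T.card ≤ (pWeight (∑ j ∈ T, C j) : ℝ)) :
    ∀ T : Finset (Fin m), ((pWeight (∑ j ∈ T, C j) : ℝ) < dc) →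
      ∃ T' : Finset (Fin m), (∑ j ∈ T', C j) = ∑ j ∈ T, C j ∧
        (T'.card : ℝ) ≤ (pWeight (∑ j ∈ T, C j) : ℝ) / η := by
  intro T hT
  obtain ⟨T', hsum, hcard⟩ := hsound T hT
  refine ⟨T', hsum, ?_⟩
  have hlt : (T'.card : ℝ) < dc' := lt_of_le_of_lt hcard (hFdc _ hT)
  have hexp' := hexp T' hlt
  rw [hsum] at hexp'
  exact (le_div_iff₀' hη).mpr hexp'
end

section
/- Localized expansion of stabilizers from check soundness: Let a stabilizer code on n qubits have code distance d, (d_c, f)-check-soundness for an increasing bijection f of [0,∞), and every check of weight at most Δ. Define f̃ recursively by f̃(1) = f⁻¹(1) and f̃(r+1) = f⁻¹( f(f̃(r)) + min(d_c, f̃(r))/Δ ). Then for every set S of qubits with |S| < min(d, d_c), and every integer r ≥ 1 with |S| < f̃(r), every stabilizer whose support is contained in S is the F₂-sum of a subset of the checks each of whose supports is contained in S̄ := {i : d(i, S) ≤ r}, where d(·,·) is distance in the code graph. -/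
open Classical

noncomputable section

/-- The code graph: two distinct qubits are adjacent iff some check acts on both. -/
def codeGraph {n m : ℕ} (C : Fin m → (Fin n → ZMod 2) × (Fin n → ZMod 2)) :
    SimpleGraph (Fin n) :=
  SimpleGraph.fromRel fun i j => ∃ k : Fin m, i ∈ pSupp (C k) ∧ j ∈ pSupp (C k)

/-- A Pauli operator is a logical operator of the code: it commutes with all checks but
is not a product (F₂-sum) of checks. -/
def IsLogical {n m : ℕ} (C : Fin m → (Fin n → ZMod 2) × (Fin n → ZMod 2))
    (p : (Fin n → ZMod 2) × (Fin n → ZMod 2)) : Prop :=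
  (∀ j : Fin m, sympl p (C j) = 0) ∧ ¬∃ T : Finset (Fin m), p = ∑ j ∈ T, C j

/-- The recursively defined radius function `f̃`: `f̃(1) = f⁻¹(1)` and
`f̃(r+1) = f⁻¹( f(f̃(r)) + min(cutoff, f̃(r))/Δ )`. -/
def ftilde (f finv : ℝ → ℝ) (cutoff Δ : ℝ) : ℕ → ℝ
  | 0 => finv 1
  | 1 => finv 1
  | (r + 2) => finv (f (ftilde f finv cutoff Δ (r + 1))
      + min cutoff (ftilde f finv cutoff Δ (r + 1)) / Δ)

namespace LocalAux

variable {n : ℕ}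

lemma pauli_add_self (p : (Fin n → ZMod 2) × (Fin n → ZMod 2)) : p + p = 0 := by
  ext i <;> simp <;> exact CharTwo.add_self_eq_zero _

lemma pauli_cancel_left {a b c : (Fin n → ZMod 2) × (Fin n → ZMod 2)} (h : a + b = c) :
    b = a + c := by rw [← h, ← add_assoc, pauli_add_self, zero_add]

lemma sum_self {α : Type*} (s : Finset α) (g : α → (Fin n → ZMod 2) × (Fin n → ZMod 2)) :
    ∑ i ∈ s, g i + ∑ i ∈ s, g i = 0 := by
  rw [← Finset.sum_add_distrib]
  exact Finset.sum_eq_zero fun i _ => pauli_add_self _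

lemma sum_symmDiff {α : Type*} [DecidableEq α] (X Y : Finset α)
    (g : α → (Fin n → ZMod 2) × (Fin n → ZMod 2)) :
    ∑ i ∈ symmDiff X Y, g i = ∑ i ∈ X, g i + ∑ i ∈ Y, g i := by
  have hX : ∑ i ∈ X \ Y, g i + ∑ i ∈ X ∩ Y, g i = ∑ i ∈ X, g i := by
    rw [← Finset.sdiff_inter_self_left X Y]
    exact Finset.sum_sdiff Finset.inter_subset_left
  have hY : ∑ i ∈ Y \ X, g i + ∑ i ∈ X ∩ Y, g i = ∑ i ∈ Y, g i := by
    rw [Finset.inter_comm X Y, ← Finset.sdiff_inter_self_left Y X]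
    exact Finset.sum_sdiff Finset.inter_subset_left
  rw [← hX, ← hY, symmDiff_def, Finset.sup_eq_union,
    Finset.sum_union disjoint_sdiff_sdiff, add_add_add_comm, sum_self, add_zero]

lemma mem_pSupp_sum {α : Type*} (s : Finset α) (g : α → (Fin n → ZMod 2) × (Fin n → ZMod 2))
    (i : Fin n) (hi : i ∈ pSupp (∑ j ∈ s, g j)) : ∃ j ∈ s, i ∈ pSupp (g j) := by
  by_contra h
  push_neg at h
  simp only [pSupp, Finset.mem_filter, Finset.mem_univ, true_and, not_or, not_not] at h hi
  have h1 : (∑ j ∈ s, g j).1 i = 0 := by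
    rw [Prod.fst_sum, Finset.sum_apply]
    exact Finset.sum_eq_zero fun j hj => (h j hj).1
  have h2 : (∑ j ∈ s, g j).2 i = 0 := by
    rw [Prod.snd_sum, Finset.sum_apply]
    exact Finset.sum_eq_zero fun j hj => (h j hj).2
  rcases hi with hi | hi
  · exact hi h1
  · exact hi h2

lemma mem_pSupp_add (p q : (Fin n → ZMod 2) × (Fin n → ZMod 2)) (i : Fin n)
    (hi : i ∈ pSupp (p + q)) : i ∈ pSupp p ∨ i ∈ pSupp q := by
  by_contra h
  push_neg at h
  simp only [pSupp, Finset.mem_filter, Finset.mem_univ, true_and, not_or, not_not] at h hi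
  obtain ⟨⟨ha1, ha2⟩, hb1, hb2⟩ := h
  rcases hi with hi | hi
  · exact hi (by simp [ha1, hb1])
  · exact hi (by simp [ha2, hb2])

def nbhd {n m : ℕ} (C : Fin m → (Fin n → ZMod 2) × (Fin n → ZMod 2)) (S : Finset (Fin n))
    (k : ℕ) : Finset (Fin n) :=
  Finset.univ.filter fun i => ∃ i' ∈ S, (codeGraph C).Reachable i i' ∧ (codeGraph C).dist i i' ≤ k

lemma subset_nbhd {m : ℕ} (C : Fin m → (Fin n → ZMod 2) × (Fin n → ZMod 2))
    (S : Finset (Fin n)) (k : ℕ) : S ⊆ nbhd C S k := by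
  intro i hi
  simp only [nbhd, Finset.mem_filter, Finset.mem_univ, true_and]
  exact ⟨i, hi, SimpleGraph.Reachable.refl i, by simp [SimpleGraph.dist_self]⟩

lemma nbhd_mono {m : ℕ} (C : Fin m → (Fin n → ZMod 2) × (Fin n → ZMod 2))
    (S : Finset (Fin n)) {k l : ℕ} (h : k ≤ l) : nbhd C S k ⊆ nbhd C S l := by
  intro i hi
  simp only [nbhd, Finset.mem_filter, Finset.mem_univ, true_and] at hi ⊢
  obtain ⟨i', h1, h2, h3⟩ := hi
  exact ⟨i', h1, h2, h3.trans h⟩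

lemma nbhd_step {m : ℕ} (C : Fin m → (Fin n → ZMod 2) × (Fin n → ZMod 2))
    (S : Finset (Fin n)) {j : Fin m} {l : ℕ} {i i'' : Fin n}
    (hi : i ∈ pSupp (C j)) (hi'' : i'' ∈ pSupp (C j)) (h2 : i'' ∈ nbhd C S l) :
    i ∈ nbhd C S (l + 1) := by
  rcases eq_or_ne i i'' with rfl | hne
  · exact nbhd_mono C S (Nat.le_succ l) h2
  · have hadj : (codeGraph C).Adj i i'' := by
      rw [codeGraph]
      exact (SimpleGraph.fromRel_adj _ _ _).mpr ⟨hne, Or.inl ⟨j, hi, hi''⟩⟩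
    simp only [nbhd, Finset.mem_filter, Finset.mem_univ, true_and] at h2 ⊢
    obtain ⟨i', hi'S, hreach, hdist⟩ := h2
    obtain ⟨w, hw⟩ := hreach.exists_walk_length_eq_dist
    refine ⟨i', hi'S, hadj.reachable.trans hreach, ?_⟩
    have hle := SimpleGraph.dist_le (SimpleGraph.Walk.cons hadj w)
    rw [SimpleGraph.Walk.length_cons, hw] at hle
    omega


lemma ftilde_nonneg (f finv : ℝ → ℝ) (dc Δ : ℝ) (hdc : 0 ≤ dc)
    (hf : ∀ x, 0 ≤ x → 0 ≤ f x) (hfinv : ∀ x, 0 ≤ x → 0 ≤ finv x) (hΔ : 0 ≤ Δ) :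
    ∀ k, 0 ≤ ftilde f finv dc Δ k := by
  have key : ∀ k, 0 ≤ ftilde f finv dc Δ k ∧ 0 ≤ ftilde f finv dc Δ (k + 1) := by
    intro k
    induction k with
    | zero => exact ⟨hfinv 1 zero_le_one, hfinv 1 zero_le_one⟩
    | succ k ih =>
      refine ⟨ih.2, ?_⟩
      show 0 ≤ finv (f (ftilde f finv dc Δ (k + 1)) + min dc (ftilde f finv dc Δ (k + 1)) / Δ)
      exact hfinv _ (add_nonneg (hf _ ih.2) (div_nonneg (le_min hdc ih.2) hΔ))
  exact fun k => (key k).1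

lemma ftilde_succ (f finv : ℝ → ℝ) (dc Δ : ℝ) :
    ∀ j, 1 ≤ j → ftilde f finv dc Δ (j + 1)
      = finv (f (ftilde f finv dc Δ j) + min dc (ftilde f finv dc Δ j) / Δ)
  | (jj + 1), _ => rfl

end LocalAux

/-- Localized expansion of stabilizers from check soundness.  For a
stabilizer code with distance `d`, `(d_c, f)`-check-soundness for an increasing
bijection `f` of `[0,∞)` and checks of weight at most `Δ`, any stabilizer supported in
a set `S` with `|S| < min(d, d_c)` and `|S| < f̃(r)` is a sum of checks supported in the
`r`-neighborhood `S̄` of `S` in the code graph. -/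
theorem localized_stabilizer_expansion_from_check_soundness
    (n m : ℕ) (C : Fin m → (Fin n → ZMod 2) × (Fin n → ZMod 2))
    (hcomm : ∀ j j' : Fin m, sympl (C j) (C j') = 0)
    (Δ : ℕ) (hΔw : ∀ j : Fin m, (pSupp (C j)).card ≤ Δ)
    (d : ℕ) (hd : ∀ p, IsLogical C p → d ≤ pWeight p)
    (dc : ℝ) (hdc : 0 < dc)
    (f finv : ℝ → ℝ)
    (hf_mono : StrictMonoOn f (Set.Ici 0))
    (hf_nonneg : ∀ x : ℝ, 0 ≤ x → 0 ≤ f x)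
    (hfinv_nonneg : ∀ x : ℝ, 0 ≤ x → 0 ≤ finv x)
    (hf_left : ∀ x : ℝ, 0 ≤ x → finv (f x) = x)
    (hf_right : ∀ x : ℝ, 0 ≤ x → f (finv x) = x)
    (hsound : ∀ T : Finset (Fin m), ((pWeight (∑ j ∈ T, C j) : ℝ) < dc) →
      ∃ T' : Finset (Fin m), (∑ j ∈ T', C j) = ∑ j ∈ T, C j ∧
        (T'.card : ℝ) ≤ f (pWeight (∑ j ∈ T, C j))) :
    ∀ S : Finset (Fin n), ((S.card : ℝ) < min (d : ℝ) dc) →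
    ∀ r : ℕ, 1 ≤ r → ((S.card : ℝ) < ftilde f finv dc Δ r) →
    ∀ T : Finset (Fin m), pSupp (∑ j ∈ T, C j) ⊆ S →
      ∃ T' : Finset (Fin m), (∑ j ∈ T', C j) = ∑ j ∈ T, C j ∧
        ∀ j ∈ T', pSupp (C j) ⊆ Finset.univ.filter
          (fun i : Fin n => ∃ i' ∈ S, (codeGraph C).Reachable i i' ∧ (codeGraph C).dist i i' ≤ r) := by
  intro S hS r hr hSr T hT
  have hne : (Finset.univ.filter fun T'' : Finset (Fin m) =>
      (∑ j ∈ T'', C j) = ∑ j ∈ T, C j).Nonempty := ⟨T, by simp⟩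
  obtain ⟨T', hT'mem, hT'min⟩ := Finset.exists_min_image _ Finset.card hne
  rw [Finset.mem_filter] at hT'mem
  have hT'sum : (∑ j ∈ T', C j) = ∑ j ∈ T, C j := hT'mem.2
  have hmin : ∀ W : Finset (Fin m), (∑ j ∈ W, C j) = ∑ j ∈ T, C j → T'.card ≤ W.card := by
    intro W hW
    exact hT'min W (by simp [hW])
  set B : ℕ → Finset (Fin m) :=
    fun k => T'.filter fun j => ∀ l, l < k → Disjoint (pSupp (C j)) (LocalAux.nbhd C S l) with hB
  have hB0 : B 0 = T' := by
    simp only [hB]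
    exact Finset.filter_true_of_mem fun j _ => fun l hl => absurd hl (Nat.not_lt_zero l)
  have hBsub : ∀ k, B k ⊆ T' := fun k => by simp only [hB]; exact Finset.filter_subset _ _
  have hBmono : ∀ k, B (k + 1) ⊆ B k := by
    intro k j hj
    simp only [hB, Finset.mem_filter] at hj ⊢
    exact ⟨hj.1, fun l hl => hj.2 l (by omega)⟩
  have hsplit : ∀ k, ∑ j ∈ T' \ B k, C j + ∑ j ∈ B k, C j = ∑ j ∈ T, C j := by
    intro k
    rw [Finset.sum_sdiff (hBsub k), hT'sum]
  have hσsupp : ∀ k, pSupp (∑ j ∈ B k, C j) ⊆ LocalAux.nbhd C S k := by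
    intro k i hi
    by_cases hiS : i ∈ S
    · exact LocalAux.subset_nbhd C S k hiS
    · have heq : (∑ j ∈ B k, C j) = ∑ j ∈ T' \ B k, C j + ∑ j ∈ T, C j :=
        LocalAux.pauli_cancel_left (hsplit k)
      rw [heq] at hi
      rcases LocalAux.mem_pSupp_add _ _ _ hi with hi1 | hi2
      · obtain ⟨j, hj, hij⟩ := LocalAux.mem_pSupp_sum _ _ _ hi1
        rw [Finset.mem_sdiff] at hj
        obtain ⟨hjT', hjB⟩ := hj
        simp only [hB, Finset.mem_filter] at hjB
        push_neg at hjB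
        obtain ⟨l, hl, hnd⟩ := hjB hjT'
        obtain ⟨i'', h1, h2⟩ := Finset.not_disjoint_iff.mp hnd
        exact LocalAux.nbhd_mono C S (by omega : l + 1 ≤ k)
          (LocalAux.nbhd_step C S hij h1 h2)
      · exact absurd (hT hi2) hiS
  have hcov : ∀ k, (pSupp (∑ j ∈ B k, C j)).card ≤ Δ * (B k \ B (k + 1)).card := by
    intro k
    have hsub : pSupp (∑ j ∈ B k, C j) ⊆ (B k \ B (k + 1)).biUnion fun j => pSupp (C j) := by
      intro i hi
      obtain ⟨j, hjBk, hij⟩ := LocalAux.mem_pSupp_sum _ _ _ hi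
      have hjT' : j ∈ T' := hBsub k hjBk
      have hiN : i ∈ LocalAux.nbhd C S k := hσsupp k hi
      have hjnot : j ∉ B (k + 1) := by
        intro hmem
        simp only [hB, Finset.mem_filter] at hmem
        exact Finset.disjoint_left.mp (hmem.2 k (by omega)) hij hiN
      exact Finset.mem_biUnion.mpr ⟨j, Finset.mem_sdiff.mpr ⟨hjBk, hjnot⟩, hij⟩
    calc (pSupp (∑ j ∈ B k, C j)).card
        ≤ ((B k \ B (k + 1)).biUnion fun j => pSupp (C j)).card := Finset.card_le_card hsub
      _ ≤ ∑ j ∈ B k \ B (k + 1), (pSupp (C j)).card := Finset.card_biUnion_le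
      _ ≤ ∑ _j ∈ B k \ B (k + 1), Δ := Finset.sum_le_sum fun j _ => hΔw j
      _ = (B k \ B (k + 1)).card * Δ := by rw [Finset.sum_const, smul_eq_mul]
      _ = Δ * (B k \ B (k + 1)).card := mul_comm _ _
  have hmin' : ∀ k (R : Finset (Fin m)),
      (∑ j ∈ R, C j) = ∑ j ∈ B k, C j → (B k).card ≤ R.card := by
    intro k R hR
    have hW : (∑ j ∈ symmDiff (T' \ B k) R, C j) = ∑ j ∈ T, C j := by
      rw [LocalAux.sum_symmDiff, hR, hsplit k]
    have h1 : T'.card ≤ (symmDiff (T' \ B k) R).card := hmin _ hW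
    have h2 : (symmDiff (T' \ B k) R).card ≤ (T' \ B k).card + R.card := by
      calc (symmDiff (T' \ B k) R).card
          = ((T' \ B k) \ R ∪ R \ (T' \ B k)).card := by rw [symmDiff_def, Finset.sup_eq_union]
        _ ≤ ((T' \ B k) \ R).card + (R \ (T' \ B k)).card := Finset.card_union_le _ _
        _ ≤ (T' \ B k).card + R.card :=
            Nat.add_le_add (Finset.card_le_card Finset.sdiff_subset)
              (Finset.card_le_card Finset.sdiff_subset)
    have h3 : (T' \ B k).card = T'.card - (B k).card := Finset.card_sdiff_of_subset (hBsub k)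
    have h4 : (B k).card ≤ T'.card := Finset.card_le_card (hBsub k)
    omega
  have hF4 : ∀ k, ((pWeight (∑ j ∈ B k, C j) : ℝ) < dc) →
      ((B k).card : ℝ) ≤ f (pWeight (∑ j ∈ B k, C j)) := by
    intro k hwk
    obtain ⟨R, hR1, hR2⟩ := hsound (B k) hwk
    exact le_trans (Nat.cast_le.mpr (hmin' k R hR1)) hR2
  have ftnn : ∀ k, 0 ≤ ftilde f finv dc Δ k :=
    LocalAux.ftilde_nonneg f finv dc Δ hdc.le hf_nonneg hfinv_nonneg (Nat.cast_nonneg Δ)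
  have claim : ∀ k, 1 ≤ r - k → ((B k).card : ℝ) < f (ftilde f finv dc Δ (r - k)) := by
    intro k
    induction k with
    | zero =>
      intro _
      have hs0 : pSupp (∑ j ∈ B 0, C j) ⊆ S := by rw [hB0, hT'sum]; exact hT
      have hw : pWeight (∑ j ∈ B 0, C j) ≤ S.card := Finset.card_le_card hs0
      have hwdc : ((pWeight (∑ j ∈ B 0, C j) : ℝ)) < dc :=
        lt_of_le_of_lt (by exact_mod_cast hw) (lt_of_lt_of_le hS (min_le_right _ _))
      have h1 := hF4 0 hwdc
      have h2 : f (pWeight (∑ j ∈ B 0, C j)) ≤ f (S.card) :=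
        hf_mono.monotoneOn (Set.mem_Ici.mpr (Nat.cast_nonneg _))
          (Set.mem_Ici.mpr (Nat.cast_nonneg _)) (by exact_mod_cast hw)
      have h3 : f (S.card) < f (ftilde f finv dc Δ r) :=
        hf_mono (Set.mem_Ici.mpr (Nat.cast_nonneg _)) (Set.mem_Ici.mpr (ftnn r)) hSr
      rw [Nat.sub_zero]
      linarith
    | succ k ih =>
      intro hk1
      have ihk := ih (by omega)
      have hrk : r - k = (r - (k + 1)) + 1 := by omega
      set j := r - (k + 1) with hj
      have hj1 : 1 ≤ j := hk1
      rw [hrk] at ihk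
      have hval : f (ftilde f finv dc Δ (j + 1))
          = f (ftilde f finv dc Δ j) + min dc (ftilde f finv dc Δ j) / Δ := by
        rw [LocalAux.ftilde_succ f finv dc Δ j hj1]
        exact hf_right _ (add_nonneg (hf_nonneg _ (ftnn j))
          (div_nonneg (le_min hdc.le (ftnn j)) (Nat.cast_nonneg Δ)))
      rw [hval] at ihk
      have hBk1 : ((B (k + 1)).card : ℝ) ≤ ((B k).card : ℝ) :=
        Nat.cast_le.mpr (Finset.card_le_card (hBmono k))
      rcases lt_or_ge ((pWeight (∑ j' ∈ B k, C j') : ℝ)) (min dc (ftilde f finv dc Δ j)) with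
        hcase | hcase
      · have hwdc := lt_of_lt_of_le hcase (min_le_left _ _)
        have h1 := hF4 k hwdc
        have h2 : f (pWeight (∑ j' ∈ B k, C j')) < f (ftilde f finv dc Δ j) :=
          hf_mono (Set.mem_Ici.mpr (Nat.cast_nonneg _)) (Set.mem_Ici.mpr (ftnn j))
            (lt_of_lt_of_le hcase (min_le_right _ _))
        linarith
      · rcases Nat.eq_zero_or_pos Δ with hΔ0 | hΔpos
        · subst hΔ0
          push_cast at ihk
          rw [div_zero, add_zero] at ihk
          push_cast
          linarith
        · have hΔR : (0 : ℝ) < (Δ : ℝ) := by exact_mod_cast hΔpos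
          have h4 : (B (k + 1)).card ≤ (B k).card := Finset.card_le_card (hBmono k)
          have hnat := hcov k
          rw [Finset.card_sdiff_of_subset (hBmono k)] at hnat
          have hcovR : ((pWeight (∑ j' ∈ B k, C j') : ℝ)) ≤
              (Δ : ℝ) * (((B k).card : ℝ) - ((B (k + 1)).card : ℝ)) := by
            have hc : ((pWeight (∑ j' ∈ B k, C j') : ℝ)) ≤
                ((Δ * ((B k).card - (B (k + 1)).card) : ℕ) : ℝ) := Nat.cast_le.mpr hnat
            rw [Nat.cast_mul, Nat.cast_sub h4] at hc
            exact hc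
          have h7 : min dc (ftilde f finv dc Δ j) ≤
              (Δ : ℝ) * ((B k).card : ℝ) - (Δ : ℝ) * ((B (k + 1)).card : ℝ) := by
            rw [← mul_sub]
            exact le_trans hcase hcovR
          have h5 : (Δ : ℝ) * ((B k).card : ℝ) <
              (Δ : ℝ) * (f (ftilde f finv dc Δ j) + min dc (ftilde f finv dc Δ j) / Δ) :=
            (mul_lt_mul_iff_right₀ hΔR).mpr ihk
          have h6 : (Δ : ℝ) * (f (ftilde f finv dc Δ j) + min dc (ftilde f finv dc Δ j) / Δ)
              = (Δ : ℝ) * f (ftilde f finv dc Δ j) + min dc (ftilde f finv dc Δ j) := by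
            field_simp
          have h8 : (Δ : ℝ) * ((B (k + 1)).card : ℝ) <
              (Δ : ℝ) * f (ftilde f finv dc Δ j) := by linarith
          exact lt_of_mul_lt_mul_left h8 (le_of_lt hΔR)
  have hfin := claim (r - 1) (by omega)
  have hr1 : r - (r - 1) = 1 := by omega
  rw [hr1] at hfin
  have hf1 : f (ftilde f finv dc Δ 1) = 1 := hf_right 1 zero_le_one
  rw [hf1] at hfin
  have hBcard : (B (r - 1)).card = 0 := by
    have : (B (r - 1)).card < 1 := by exact_mod_cast hfin
    omega
  have hBempty : B (r - 1) = ∅ := Finset.card_eq_zero.mp hBcard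
  refine ⟨T', hT'sum, ?_⟩
  intro jj hjj i hi
  rcases Nat.lt_or_ge r 2 with hr2 | hr2
  · exfalso
    have hr10 : r - 1 = 0 := by omega
    rw [hr10, hB0] at hBempty
    rw [hBempty] at hjj
    exact Finset.notMem_empty jj hjj
  · have hnot : jj ∉ B (r - 1) := by rw [hBempty]; exact Finset.notMem_empty jj
    simp only [hB, Finset.mem_filter] at hnot
    push_neg at hnot
    obtain ⟨l, hl, hndisj⟩ := hnot hjj
    obtain ⟨i'', hi''1, hi''2⟩ := Finset.not_disjoint_iff.mp hndisj
    have hstep : i ∈ LocalAux.nbhd C S (l + 1) := LocalAux.nbhd_step C S hi hi''1 hi''2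
    have hiN : i ∈ LocalAux.nbhd C S r := LocalAux.nbhd_mono C S (by omega : l + 1 ≤ r) hstep
    simpa only [LocalAux.nbhd, Finset.mem_filter, Finset.mem_univ, true_and] using hiN
end
end

section
/- Summability from subquadratic check soundness on expander graphs: Let Δ ≥ 2 be an integer, c_f > 0, and 0 < β < 1, and let f be an increasing bijection of [0,∞) with f(M) ≤ c_f·M^{2−β} for all M ≥ 0. Then there exist constants c'_f, c''_f > 0 depending only on Δ, c_f, β such that, setting α := (1−β)/β, for every cutoff d_c > 0 and every δκ > 0: Σ over integers r ≥ 1 with f̃(r) < d_c of Δ^r·exp(−δκ·f̃(r)) is at most c''_f·exp(c'_f·(δκ)^{−α}), where f̃ is defined recursively by f̃(1) = f⁻¹(1) and f̃(r+1) = f⁻¹( f(f̃(r)) + min(d_c, f̃(r))/Δ ). -/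
/-!
While `f̃ r < d_c` the recursion reads `f (f̃ (r+1)) = f (f̃ r) + f̃ r / Δ`, and inverting the
growth bound gives `f̃ r ≥ (f (f̃ r) / c_f) ^ p` with `p = 1/(2-β) < 1`. Hence `a r = f (f̃ r)`
satisfies `a (r+1) ≥ a r + κ · (a r) ^ p`, which forces `a r ≳ r ^ (1/(1-p))` (compare with the
increments of `(ε r) ^ (1/(1-p))`), i.e. `f̃ r ≳ r ^ s` with `s = 1/(1-β) > 1`. Superlinear growth
in the exponent beats the volume factor: `2 r log Δ - δκ c r ^ s ≤ 2 log Δ · r₀` with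
`r₀ = (2 log Δ / (δκ c)) ^ (1/(s-1))` and `1/(s-1) = α`, so the `r`-th term is at most
`exp (C δκ^(-α)) · 2^(-r)`.
-/

noncomputable section

open Real

theorem add_rpow_sub_rpow_le {q u ε : ℝ} (hq : 1 ≤ q) (hu : 0 < u) (hε : 0 ≤ ε) :
    (u + ε) ^ q - u ^ q ≤ q * ε * (u + ε) ^ (q - 1) := by
  have hv : 0 < u + ε := by linarith
  have bernoulli := one_add_mul_self_le_rpow_one_add (s := -ε / (u + ε))
    (by rw [neg_div, neg_le_neg_iff, div_le_one hv]; linarith) hq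
  rw [show 1 + -ε / (u + ε) = u / (u + ε) by field_simp; ring, div_rpow hu.le hv.le,
    le_div_iff₀ (rpow_pos_of_pos hv q)] at bernoulli
  rw [rpow_sub_one hv.ne']
  have hexpand : (1 + q * (-ε / (u + ε))) * (u + ε) ^ q =
      (u + ε) ^ q - q * ε * ((u + ε) ^ q / (u + ε)) := by ring
  linarith

theorem add_rpow_le_rpow_add_mul_rpow {q u ε : ℝ} (hq : 1 ≤ q) (hu : 0 < u) (hε : 0 ≤ ε)
    (hεu : ε ≤ u) : (u + ε) ^ q ≤ u ^ q + q * 2 ^ (q - 1) * ε * u ^ (q - 1) := by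
  have hdouble : (u + ε) ^ (q - 1) ≤ 2 ^ (q - 1) * u ^ (q - 1) := by
    rw [← mul_rpow zero_le_two hu.le]
    exact rpow_le_rpow (by linarith) (by linarith) (by linarith)
  have hconvex := add_rpow_sub_rpow_le hq hu hε
  have hqε : 0 ≤ q * ε := by positivity
  nlinarith [mul_le_mul_of_nonneg_left hdouble hqε]

theorem exists_rpow_le_of_add_mul_rpow_le {p κ : ℝ} (hp0 : 0 ≤ p) (hp1 : p < 1) (hκ : 0 < κ) :
    ∃ ε > 0, ∀ (a : ℕ → ℝ) (N : ℕ), 1 ≤ a 0 → (∀ n < N, a n + κ * a n ^ p ≤ a (n + 1)) →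
      (ε * (N + 1)) ^ (1 - p)⁻¹ ≤ a N := by
  set q := (1 - p)⁻¹
  have hq : 1 ≤ q := one_le_inv₀ (by linarith) |>.mpr (by linarith)
  have hqp : q * p = q - 1 := by
    have : (1 - p) * q = 1 := mul_inv_cancel₀ (by linarith)
    linarith
  set ε := min 1 (κ / (q * 2 ^ (q - 1)))
  have hε : 0 < ε := by positivity
  have hεκ : q * 2 ^ (q - 1) * ε ≤ κ := by
    rw [← le_div_iff₀' (by positivity)]
    exact min_le_right _ _
  refine ⟨ε, hε, fun a N ha0 hstep => ?_⟩
  induction N with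
  | zero =>
    simp only [Nat.cast_zero, zero_add, mul_one]
    exact (rpow_le_one hε.le (min_le_left _ _) (by linarith)).trans ha0
  | succ n ih =>
    have ih := ih fun m hm => hstep m (by omega)
    set u := ε * (n + 1)
    have hu : 0 < u := by positivity
    have hεu : ε ≤ u := le_mul_of_one_le_right hε.le (by linarith [n.cast_nonneg (α := ℝ)])
    calc (ε * ((n + 1 : ℕ) + 1 : ℝ)) ^ q = (u + ε) ^ q := by simp only [u]; push_cast; ring_nf
      _ ≤ u ^ q + q * 2 ^ (q - 1) * ε * u ^ (q - 1) :=
        add_rpow_le_rpow_add_mul_rpow hq hu hε.le hεu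
      _ ≤ u ^ q + κ * (u ^ q) ^ p := by
        rw [← rpow_mul hu.le, hqp]
        gcongr
      _ ≤ a n + κ * a n ^ p := by gcongr
      _ ≤ a (n + 1) := hstep n n.lt_succ_self

theorem div_rpow_inv_le_of_le_mul_rpow {x y c e : ℝ} (hx : 0 ≤ x) (hy : 0 ≤ y) (hc : 0 < c)
    (he : 0 < e) (h : y ≤ c * x ^ e) : (y / c) ^ e⁻¹ ≤ x := by
  calc (y / c) ^ e⁻¹ ≤ (x ^ e) ^ e⁻¹ :=
        rpow_le_rpow (by positivity) ((div_le_iff₀' hc).mpr h) (by positivity)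
    _ = x := rpow_rpow_inv hx he.ne'

theorem mul_sub_mul_rpow_le {A B s r : ℝ} (hA : 0 ≤ A) (hB : 0 < B) (hs : 1 < s) (hr : 0 ≤ r) :
    A * r - B * r ^ s ≤ A * (A / B) ^ (s - 1)⁻¹ := by
  set r₀ := (A / B) ^ (s - 1)⁻¹
  have hr₀ : 0 ≤ r₀ := by positivity
  rcases le_total r r₀ with hle | hle
  · nlinarith [rpow_nonneg hr s]
  · have hpow : A / B ≤ r ^ (s - 1) := by
      calc A / B = r₀ ^ (s - 1) := (rpow_inv_rpow (by positivity) (by linarith)).symm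
        _ ≤ r ^ (s - 1) := rpow_le_rpow hr₀ hle (by linarith)
    have hsplit : r ^ s = r ^ (s - 1) * r := by
      rw [← rpow_add_one' hr (by linarith), sub_add_cancel]
    rw [div_le_iff₀ hB] at hpow
    nlinarith [mul_le_mul_of_nonneg_right hpow hr, mul_nonneg hA hr₀]

theorem pow_mul_exp_neg_le {Δ c s t x : ℝ} (hΔ : 2 ≤ Δ) (hc : 0 < c) (hs : 1 < s) (ht : 0 < t)
    (r : ℕ) (hx : c * (r : ℝ) ^ s ≤ x) :
    Δ ^ r * exp (-(t * x)) ≤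
      exp (2 * log Δ * (2 * log Δ / (t * c)) ^ (s - 1)⁻¹) * (1 / 2) ^ r := by
  have hΔ0 : 0 < Δ := by linarith
  have hlog : 0 ≤ log Δ := log_nonneg (by linarith)
  have hpow : ∀ m : ℕ, Δ ^ m = exp (log Δ * m) := fun m => by
    rw [← rpow_natCast, rpow_def_of_pos hΔ0]
  have hpeak := mul_sub_mul_rpow_le (by positivity : 0 ≤ 2 * log Δ) (mul_pos ht hc) hs r.cast_nonneg
  have hhalf : (1 / Δ) ^ r ≤ (1 / 2 : ℝ) ^ r := by gcongr
  calc Δ ^ r * exp (-(t * x)) = exp (2 * log Δ * r - t * x) * (1 / Δ) ^ r := by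
        rw [div_pow, one_pow, hpow, sub_eq_add_neg, exp_add,
          show 2 * log Δ * r = log Δ * r + log Δ * r by ring, exp_add]
        field_simp
    _ ≤ exp (2 * log Δ * (2 * log Δ / (t * c)) ^ (s - 1)⁻¹) * (1 / 2) ^ r := by
        gcongr
        nlinarith

theorem exists_sum_pow_mul_exp_neg_le {Δ c s : ℝ} (hΔ : 2 ≤ Δ) (hc : 0 < c) (hs : 1 < s) :
    ∃ C > 0, ∀ t > 0, ∀ (x : ℕ → ℝ) (S : Finset ℕ), (∀ r ∈ S, c * (r : ℝ) ^ s ≤ x r) →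
      ∑ r ∈ S, Δ ^ r * exp (-(t * x r)) ≤ 2 * exp (C * t ^ (-(s - 1)⁻¹)) := by
  have hlog : 0 < log Δ := log_pos (by linarith)
  refine ⟨2 * log Δ * (2 * log Δ / c) ^ (s - 1)⁻¹, by positivity, fun t ht x S hx => ?_⟩
  have hscale : 2 * log Δ * (2 * log Δ / (t * c)) ^ (s - 1)⁻¹ =
      2 * log Δ * (2 * log Δ / c) ^ (s - 1)⁻¹ * t ^ (-(s - 1)⁻¹) := by
    rw [div_mul_eq_div_div_swap, div_rpow (by positivity) ht.le, rpow_neg ht.le]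
    ring
  have hgeom : ∑ r ∈ S, (1 / 2 : ℝ) ^ r ≤ 2 :=
    (summable_geometric_two.sum_le_tsum S fun _ _ => by positivity).trans_eq tsum_geometric_two
  calc ∑ r ∈ S, Δ ^ r * exp (-(t * x r))
      ≤ ∑ r ∈ S, exp (2 * log Δ * (2 * log Δ / (t * c)) ^ (s - 1)⁻¹) * (1 / 2) ^ r :=
        Finset.sum_le_sum fun r hr => pow_mul_exp_neg_le hΔ hc hs ht r (hx r hr)
    _ ≤ exp (2 * log Δ * (2 * log Δ / (t * c)) ^ (s - 1)⁻¹) * 2 := by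
        rw [← Finset.mul_sum]
        gcongr
    _ = 2 * exp (2 * log Δ * (2 * log Δ / c) ^ (s - 1)⁻¹ * t ^ (-(s - 1)⁻¹)) := by
        rw [hscale, mul_comm]

section ftilde

variable {f finv : ℝ → ℝ} {dc Δ : ℝ}

theorem ftilde_nonneg (hf_nonneg : ∀ x : ℝ, 0 ≤ x → 0 ≤ f x)
    (hfinv_nonneg : ∀ x : ℝ, 0 ≤ x → 0 ≤ finv x) (hdc : 0 ≤ dc) (hΔ : 0 ≤ Δ) :
    ∀ r, 0 ≤ ftilde f finv dc Δ r
  | 0 | 1 => hfinv_nonneg 1 zero_le_one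
  | r + 2 => by
    have ih := ftilde_nonneg hf_nonneg hfinv_nonneg hdc hΔ (r + 1)
    exact hfinv_nonneg _ (add_nonneg (hf_nonneg _ ih) (div_nonneg (le_min hdc ih) hΔ))

theorem f_ftilde_add_two (hf_nonneg : ∀ x : ℝ, 0 ≤ x → 0 ≤ f x)
    (hfinv_nonneg : ∀ x : ℝ, 0 ≤ x → 0 ≤ finv x) (hf_right : ∀ x : ℝ, 0 ≤ x → f (finv x) = x)
    (hdc : 0 ≤ dc) (hΔ : 0 ≤ Δ) (r : ℕ) :
    f (ftilde f finv dc Δ (r + 2)) =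
      f (ftilde f finv dc Δ (r + 1)) + min dc (ftilde f finv dc Δ (r + 1)) / Δ := by
  have h := ftilde_nonneg hf_nonneg hfinv_nonneg hdc hΔ (r + 1)
  exact hf_right _ (add_nonneg (hf_nonneg _ h) (div_nonneg (le_min hdc h) hΔ))

theorem monotone_ftilde_succ (hf_mono : StrictMonoOn f (Set.Ici 0))
    (hf_nonneg : ∀ x : ℝ, 0 ≤ x → 0 ≤ f x) (hfinv_nonneg : ∀ x : ℝ, 0 ≤ x → 0 ≤ finv x)
    (hf_right : ∀ x : ℝ, 0 ≤ x → f (finv x) = x) (hdc : 0 ≤ dc) (hΔ : 0 ≤ Δ) :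
    Monotone fun n => ftilde f finv dc Δ (n + 1) := by
  have hx := ftilde_nonneg hf_nonneg hfinv_nonneg hdc hΔ
  refine monotone_nat_of_le_succ fun n => ?_
  rw [← hf_mono.le_iff_le (hx _) (hx _), f_ftilde_add_two hf_nonneg hfinv_nonneg hf_right hdc hΔ]
  have := div_nonneg (le_min hdc (hx (n + 1))) hΔ
  linarith

theorem exists_mul_rpow_le_ftilde {c_f β : ℝ} (hΔ : 0 < Δ) (hcf : 0 < c_f)
    (hβ1 : β < 1) (hf_mono : StrictMonoOn f (Set.Ici 0))
    (hf_nonneg : ∀ x : ℝ, 0 ≤ x → 0 ≤ f x) (hfinv_nonneg : ∀ x : ℝ, 0 ≤ x → 0 ≤ finv x)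
    (hf_right : ∀ x : ℝ, 0 ≤ x → f (finv x) = x)
    (hgrow : ∀ M : ℝ, 0 ≤ M → f M ≤ c_f * M ^ ((2 : ℝ) - β)) :
    ∃ c > 0, ∀ dc > 0, ∀ r : ℕ, 1 ≤ r → ftilde f finv dc Δ r < dc →
      c * (r : ℝ) ^ (1 - β)⁻¹ ≤ ftilde f finv dc Δ r := by
  set p := (2 - β)⁻¹
  have h2β : 2 - β ≠ 0 := by linarith
  have h1β : 1 - β ≠ 0 := by linarith
  have hp0 : 0 < p := inv_pos.mpr (by linarith)
  have hp1 : p < 1 := inv_lt_one_of_one_lt₀ (by linarith)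
  have hqp : (1 - p)⁻¹ * p = (1 - β)⁻¹ := by
    have h : 1 - p = (1 - β) * p := by
      simp only [p]
      field_simp
      ring
    rw [h, mul_inv, mul_assoc, inv_mul_cancel₀ hp0.ne', mul_one]
  obtain ⟨ε, hε, hgrowth⟩ := exists_rpow_le_of_add_mul_rpow_le hp0.le hp1
    (by positivity : 0 < (c_f ^ p)⁻¹ / Δ)
  refine ⟨ε ^ (1 - β)⁻¹ / c_f ^ p, by positivity, fun dc hdc r hr hlt => ?_⟩
  obtain ⟨n, rfl⟩ : ∃ n, r = n + 1 := ⟨r - 1, by omega⟩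
  set x := ftilde f finv dc Δ
  have hx : ∀ r, 0 ≤ x r := ftilde_nonneg hf_nonneg hfinv_nonneg hdc.le hΔ.le
  have hlow : ∀ m, (f (x (m + 1))) ^ p / c_f ^ p ≤ x (m + 1) := fun m => by
    rw [← div_rpow (hf_nonneg _ (hx _)) hcf.le]
    exact div_rpow_inv_le_of_le_mul_rpow (hx _) (hf_nonneg _ (hx _)) hcf (by linarith)
      (hgrow _ (hx _))
  have hstep : ∀ m < n, f (x (m + 1)) + (c_f ^ p)⁻¹ / Δ * f (x (m + 1)) ^ p ≤ f (x (m + 2)) := by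
    intro m hm
    have hbelow : x (m + 1) ≤ dc :=
      ((monotone_ftilde_succ hf_mono hf_nonneg hfinv_nonneg hf_right hdc.le hΔ.le hm.le).trans_lt
        hlt).le
    rw [f_ftilde_add_two hf_nonneg hfinv_nonneg hf_right hdc.le hΔ.le, min_eq_right hbelow]
    have hterm : (c_f ^ p)⁻¹ / Δ * f (x (m + 1)) ^ p ≤ x (m + 1) / Δ :=
      calc (c_f ^ p)⁻¹ / Δ * f (x (m + 1)) ^ p = f (x (m + 1)) ^ p / c_f ^ p / Δ := by ring
        _ ≤ x (m + 1) / Δ := by gcongr; exact hlow m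
    exact add_le_add le_rfl hterm
  have ha := hgrowth (fun m => f (x (m + 1))) n (hf_right 1 zero_le_one).ge hstep
  calc ε ^ (1 - β)⁻¹ / c_f ^ p * ((n + 1 : ℕ) : ℝ) ^ (1 - β)⁻¹
      = ((ε * (n + 1)) ^ (1 - p)⁻¹) ^ p / c_f ^ p := by
        rw [← rpow_mul (by positivity), hqp, mul_rpow hε.le (by positivity)]
        push_cast
        ring
    _ ≤ f (x (n + 1)) ^ p / c_f ^ p := by gcongr
    _ ≤ x (n + 1) := hlow n

end ftilde

theorem summability_from_subquadratic_check_soundness_general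
    (Δ : ℕ) (hΔ : 2 ≤ Δ) (c_f β : ℝ) (hcf : 0 < c_f) (hβ0 : 0 < β) (hβ1 : β < 1)
    (f finv : ℝ → ℝ)
    (hf_mono : StrictMonoOn f (Set.Ici 0))
    (hf_nonneg : ∀ x : ℝ, 0 ≤ x → 0 ≤ f x)
    (hfinv_nonneg : ∀ x : ℝ, 0 ≤ x → 0 ≤ finv x)
    (hf_right : ∀ x : ℝ, 0 ≤ x → f (finv x) = x)
    (hgrow : ∀ M : ℝ, 0 ≤ M → f M ≤ c_f * M ^ ((2 : ℝ) - β)) :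
    ∃ c'f c''f : ℝ, 0 < c'f ∧ 0 < c''f ∧
      ∀ dc : ℝ, 0 < dc → ∀ δκ : ℝ, 0 < δκ → ∀ R : ℕ,
        (∑ r ∈ Finset.Icc 1 R,
          if ftilde f finv dc Δ r < dc then
            (Δ : ℝ) ^ r * Real.exp (-(δκ * ftilde f finv dc Δ r))
          else 0)
        ≤ c''f * Real.exp (c'f * δκ ^ (-((1 - β) / β))) := by
  have hΔ' : (2 : ℝ) ≤ Δ := by exact_mod_cast hΔ
  obtain ⟨c, hc, hlow⟩ := exists_mul_rpow_le_ftilde (Δ := Δ) (by linarith) hcf hβ1 hf_mono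
    hf_nonneg hfinv_nonneg hf_right hgrow
  obtain ⟨C, hC, hsum⟩ := exists_sum_pow_mul_exp_neg_le hΔ' hc
    ((one_lt_inv₀ (by linarith)).mpr (by linarith : 1 - β < 1))
  have hα : ((1 - β)⁻¹ - 1)⁻¹ = (1 - β) / β := by
    have h1β : 1 - β ≠ 0 := by linarith
    rw [show (1 - β)⁻¹ - 1 = β / (1 - β) by field_simp; ring, inv_div]
  refine ⟨C, 2, hC, two_pos, fun dc hdc δκ hδκ R => ?_⟩
  rw [← Finset.sum_filter, ← hα]
  refine hsum δκ hδκ _ _ fun r hr => ?_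
  rw [Finset.mem_filter, Finset.mem_Icc] at hr
  exact hlow dc hdc r hr.1.1 hr.2

/-- Summability from subquadratic check soundness on expander graphs.
For `Δ ≥ 2`, `c_f > 0`, `0 < β < 1` and an increasing bijection `f` of `[0,∞)` with
`f(M) ≤ c_f·M^{2−β}`, there are constants `c'_f, c''_f > 0` depending only on
`Δ, c_f, β` such that, with `α = (1−β)/β`, for every cutoff `d_c > 0` and every
`δκ > 0`, every partial sum of `Σ_{r ≥ 1, f̃(r) < d_c} Δ^r·exp(−δκ·f̃(r))` is at most
`c''_f·exp(c'_f·δκ^{−α})`. -/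
theorem summability_from_subquadratic_check_soundness
    (Δ : ℕ) (hΔ : 2 ≤ Δ) (c_f β : ℝ) (hcf : 0 < c_f) (hβ0 : 0 < β) (hβ1 : β < 1)
    (f finv : ℝ → ℝ)
    (hf_mono : StrictMonoOn f (Set.Ici 0))
    (hf_nonneg : ∀ x : ℝ, 0 ≤ x → 0 ≤ f x)
    (hfinv_nonneg : ∀ x : ℝ, 0 ≤ x → 0 ≤ finv x)
    (hf_left : ∀ x : ℝ, 0 ≤ x → finv (f x) = x)
    (hf_right : ∀ x : ℝ, 0 ≤ x → f (finv x) = x)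
    (hgrow : ∀ M : ℝ, 0 ≤ M → f M ≤ c_f * M ^ ((2 : ℝ) - β)) :
    ∃ c'f c''f : ℝ, 0 < c'f ∧ 0 < c''f ∧
      ∀ dc : ℝ, 0 < dc → ∀ δκ : ℝ, 0 < δκ → ∀ R : ℕ,
        (∑ r ∈ Finset.Icc 1 R,
          if ftilde f finv dc Δ r < dc then
            (Δ : ℝ) ^ r * Real.exp (-(δκ * ftilde f finv dc Δ r))
          else 0)
        ≤ c''f * Real.exp (c'f * δκ ^ (-((1 - β) / β))) :=
  summability_from_subquadratic_check_soundness_general Δ hΔ c_f β hcf hβ0 hβ1 f finv hf_mono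
    hf_nonneg hfinv_nonneg hf_right hgrow
end
end

section
/- Power-law lower bound for the soundness recursion: Let c_f, Δ > 0 and 0 < β < 1. There exists a constant c̃ > 0 depending only on c_f, Δ, β such that: for every function g : {1, 2, 3, …} → ℝ with g(1) ≥ 1 and g(r+1) ≥ g(r) + (g(r)/c_f)^{1/(2−β)}/Δ for all r ≥ 1, one has g(r) ≥ c_f·(c̃·r^{1/(1−β)})^{2−β} for all r ≥ 1; equivalently, (g(r)/c_f)^{1/(2−β)} ≥ c̃·r^{1/(1−β)} for all r ≥ 1. -/
/-!
Normalising `h = g / c_f`, the recursion reads `h (r + 1) ≥ h r + κ · h r ^ p` with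
`p = 1/(2-β)` and `κ = 1/(c_f Δ)`, the discrete analogue of `h' = κ h^p`, whose solutions grow
like `r ^ γ` with `γ = 1/(1-p) = (2-β)/(1-β)`. By convexity of `x ↦ x ^ γ`, the increment of
`c r ^ γ` is at most `γ 2^(γ-1) c r^(γ-1)`, while the recursion adds at least `κ c^p r^(γ-1)`;
since `p < 1`, the second wins for all small `c`, so `h r ≥ c r ^ γ` by induction.
-/

open Filter Topology Real

lemma rpow_sub_rpow_le_mul_rpow_sub_one_mul {γ x y : ℝ} (hγ : 1 ≤ γ) (hx : 0 ≤ x)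
    (hxy : x ≤ y) : y ^ γ - x ^ γ ≤ γ * y ^ (γ - 1) * (y - x) := by
  rcases hxy.eq_or_lt with rfl | hxy
  · simp
  have hy : 0 < y := hx.trans_lt hxy
  have bernoulli := one_add_mul_self_le_rpow_one_add
    (s := (x - y) / y) (by rw [le_div_iff₀ hy]; linarith) hγ
  rw [show 1 + (x - y) / y = x / y by field_simp; ring, div_rpow hx hy.le,
    le_div_iff₀ (rpow_pos_of_pos hy γ)] at bernoulli
  rw [rpow_sub_one hy.ne']
  have : γ * (y ^ γ / y) * (y - x) = -(γ * ((x - y) / y)) * y ^ γ := by field_simp; ring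
  linarith

lemma mul_rpow_le_of_le_add_mul_rpow {γ p κ c : ℝ} {h : ℕ → ℝ} (hγ : 1 ≤ γ)
    (hpγ : p * γ = γ - 1) (hκ : 0 ≤ κ) (hc : 0 ≤ c) (hcκ : c * (γ * 2 ^ (γ - 1)) ≤ κ * c ^ p)
    (h1 : c ≤ h 1) (hrec : ∀ r : ℕ, 1 ≤ r → h r + κ * h r ^ p ≤ h (r + 1)) :
    ∀ r : ℕ, 1 ≤ r → c * (r : ℝ) ^ γ ≤ h r := by
  have hp : 0 ≤ p := nonneg_of_mul_nonneg_left (hpγ ▸ sub_nonneg.2 hγ) (by linarith)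
  intro r hr
  induction r, hr using Nat.le_induction with
  | base => simpa using h1
  | succ n hn ih =>
    have hn0 : (0 : ℝ) ≤ n := n.cast_nonneg
    have increment : ((n : ℝ) + 1) ^ γ - (n : ℝ) ^ γ ≤ γ * ((n : ℝ) + 1) ^ (γ - 1) := by
      simpa using
        rpow_sub_rpow_le_mul_rpow_sub_one_mul hγ hn0 (le_add_of_nonneg_right zero_le_one)
    have doubling : ((n : ℝ) + 1) ^ (γ - 1) ≤ 2 ^ (γ - 1) * (n : ℝ) ^ (γ - 1) := by
      have : (1 : ℝ) ≤ n := by exact_mod_cast hn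
      rw [← mul_rpow zero_le_two hn0]
      exact rpow_le_rpow (by linarith) (by linarith) (by linarith)
    push_cast
    calc c * ((n : ℝ) + 1) ^ γ
        ≤ c * ((n : ℝ) ^ γ + γ * ((n : ℝ) + 1) ^ (γ - 1)) := by gcongr; linarith
      _ ≤ c * ((n : ℝ) ^ γ + γ * (2 ^ (γ - 1) * (n : ℝ) ^ (γ - 1))) := by gcongr
      _ = c * (n : ℝ) ^ γ + c * (γ * 2 ^ (γ - 1)) * (n : ℝ) ^ (γ - 1) := by ring
      _ ≤ c * (n : ℝ) ^ γ + κ * c ^ p * (n : ℝ) ^ (γ - 1) := by gcongr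
      _ = c * (n : ℝ) ^ γ + κ * (c * (n : ℝ) ^ γ) ^ p := by
        rw [mul_rpow hc (by positivity), ← rpow_mul hn0, mul_comm γ, hpγ, mul_assoc]
      _ ≤ h n + κ * h n ^ p := by gcongr
      _ ≤ h (n + 1) := hrec n hn

lemma eventually_mul_le_mul_rpow {p κ : ℝ} (M : ℝ) (hp : p < 1) (hκ : 0 < κ) :
    ∀ᶠ c in 𝓝[>] 0, c * M ≤ κ * c ^ p := by
  have hlim : Tendsto (fun c : ℝ ↦ c ^ (1 - p) * M) (𝓝[>] 0) (𝓝 0) := by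
    have := ((continuousAt_rpow_const 0 (1 - p) (Or.inr (by linarith))).tendsto.mul_const M)
    rw [zero_rpow (by linarith), zero_mul] at this
    exact this.mono_left nhdsWithin_le_nhds
  filter_upwards [hlim.eventually_le_const hκ, self_mem_nhdsWithin] with c hc (hc0 : 0 < c)
  calc c * M = c ^ p * (c ^ (1 - p) * M) := by
        rw [← mul_assoc, ← rpow_add hc0, add_sub_cancel, rpow_one]
    _ ≤ κ * c ^ p := by rw [mul_comm κ]; gcongr

theorem soundness_recursion_power_law_growth_general
    (c_f Δ β : ℝ) (hc : 0 < c_f) (hΔ : 0 < Δ) (hβ1 : β < 1) :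
    ∃ ctilde : ℝ, 0 < ctilde ∧
      ∀ g : ℕ → ℝ, 1 ≤ g 1 →
        (∀ r : ℕ, 1 ≤ r → g r + (g r / c_f) ^ ((1 : ℝ) / (2 - β)) / Δ ≤ g (r + 1)) →
        ∀ r : ℕ, 1 ≤ r →
          c_f * (ctilde * (r : ℝ) ^ ((1 : ℝ) / (1 - β))) ^ ((2 : ℝ) - β) ≤ g r ∧
          ctilde * (r : ℝ) ^ ((1 : ℝ) / (1 - β)) ≤ (g r / c_f) ^ ((1 : ℝ) / (2 - β)) := by
  set p : ℝ := 1 / (2 - β)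
  set γ : ℝ := (2 - β) / (1 - β)
  have hβ2 : 0 < 2 - β := by linarith
  have hβ1' : 0 < 1 - β := by linarith
  have hγ : 1 ≤ γ := by rw [le_div_iff₀ hβ1']; linarith
  have hγ1 : γ - 1 = 1 / (1 - β) := by simp only [γ]; field_simp; ring
  have hp2 : p * (2 - β) = 1 := by simp only [p]; field_simp
  have hpγ : p * γ = γ - 1 := by rw [hγ1]; simp only [p, γ]; field_simp
  have hκ : 0 < (c_f * Δ)⁻¹ := by positivity
  obtain ⟨c, hcκ, hc0, hc1⟩ := ((eventually_mul_le_mul_rpow (γ * 2 ^ (γ - 1))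
    (show p < 1 by rw [div_lt_one hβ2]; linarith) hκ).and (Ioc_mem_nhdsGT (inv_pos.2 hc))).exists
  refine ⟨c ^ p, by positivity, fun g hg1 hrec r hr ↦ ?_⟩
  have hlow : c * (r : ℝ) ^ γ ≤ g r / c_f := by
    refine mul_rpow_le_of_le_add_mul_rpow (h := fun r ↦ g r / c_f) hγ hpγ hκ.le hc0.le hcκ
      (hc1.trans ?_) (fun r hr ↦ ?_) r hr
    · rw [inv_eq_one_div]; gcongr
    · calc g r / c_f + (c_f * Δ)⁻¹ * (g r / c_f) ^ p
            = (g r + (g r / c_f) ^ p / Δ) / c_f := by field_simp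
        _ ≤ g (r + 1) / c_f := by gcongr; exact hrec r hr
  have hnorm : c ^ p * (r : ℝ) ^ (1 / (1 - β)) ≤ (g r / c_f) ^ p := by
    calc c ^ p * (r : ℝ) ^ (1 / (1 - β)) = (c * (r : ℝ) ^ γ) ^ p := by
          rw [mul_rpow hc0.le (by positivity), ← rpow_mul (by positivity), mul_comm γ, hpγ, hγ1]
      _ ≤ (g r / c_f) ^ p := rpow_le_rpow (by positivity) hlow (by positivity)
  refine ⟨?_, hnorm⟩
  have hg : 0 ≤ g r / c_f := (by positivity : 0 ≤ c * (r : ℝ) ^ γ).trans hlow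
  calc c_f * (c ^ p * (r : ℝ) ^ (1 / (1 - β))) ^ (2 - β)
        ≤ c_f * ((g r / c_f) ^ p) ^ (2 - β) := by gcongr
    _ = g r := by rw [← rpow_mul hg, hp2, rpow_one, mul_div_cancel₀ _ hc.ne']

/-- Power-law lower bound for the soundness recursion.  For `c_f, Δ > 0`
and `0 < β < 1` there is a constant `ctilde > 0` depending only on `c_f, Δ, β` such that any
sequence `g` (on positive integers) with `g(1) ≥ 1` and
`g(r+1) ≥ g(r) + (g(r)/c_f)^{1/(2−β)}/Δ` satisfies
`g(r) ≥ c_f·(ctilde·r^{1/(1−β)})^{2−β}`, equivalently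
`(g(r)/c_f)^{1/(2−β)} ≥ ctilde·r^{1/(1−β)}`, for all `r ≥ 1`. -/
theorem soundness_recursion_power_law_growth
    (c_f Δ β : ℝ) (hc : 0 < c_f) (hΔ : 0 < Δ) (hβ0 : 0 < β) (hβ1 : β < 1) :
    ∃ ctilde : ℝ, 0 < ctilde ∧
      ∀ g : ℕ → ℝ, 1 ≤ g 1 →
        (∀ r : ℕ, 1 ≤ r → g r + (g r / c_f) ^ ((1 : ℝ) / (2 - β)) / Δ ≤ g (r + 1)) →
        ∀ r : ℕ, 1 ≤ r →
          c_f * (ctilde * (r : ℝ) ^ ((1 : ℝ) / (1 - β))) ^ ((2 : ℝ) - β) ≤ g r ∧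
          ctilde * (r : ℝ) ^ ((1 : ℝ) / (1 - β)) ≤ (g r / c_f) ^ ((1 : ℝ) / (2 - β)) :=
  soundness_recursion_power_law_growth_general c_f Δ β hc hΔ hβ1
end

section
/- Exponential-times-stretched-exponential sum bound (expander case): Let Δ > 1, a > 0, and 0 < β < 1. Then there exist constants C₁, C₂ > 0 depending only on Δ, a, β such that for every δ > 0: the series Σ_{r=0}^{∞} Δ^r·exp(−a·δ·r^{1/(1−β)}) converges and is at most C₂·exp(C₁·δ^{−(1−β)/β}). -/
/-!
With the Hölder conjugate exponents `p = 1/(1-β)` and `q = 1/β`, Young's inequality gives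
`(log Δ + 1) r ≤ a δ r^p + C₁ δ^(-q/p)` with `q/p = (1-β)/β` and `C₁` not depending on `δ`.
Hence the `r`-th term is at most `exp (C₁ δ^(-(1-β)/β)) · e^(-r)`, and summing the geometric
series gives the bound with `C₂ = (1 - e⁻¹)⁻¹`.
-/

open Real

theorem mul_le_rpow_add_of_holderConjugate {p q L c x : ℝ} (hpq : p.HolderConjugate q)
    (hL : 0 ≤ L) (hc : 0 < c) (hx : 0 ≤ x) :
    L * x ≤ c * x ^ p + L ^ q * (c * p) ^ (-(q / p)) / q := by
  have hcp : 0 < c * p := mul_pos hc hpq.pos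
  have young := young_inequality_of_nonneg (mul_nonneg (rpow_nonneg hcp.le p⁻¹) hx)
    (mul_nonneg hL (rpow_nonneg hcp.le (-p⁻¹))) hpq
  have hcancel : (c * p) ^ p⁻¹ * (c * p) ^ (-p⁻¹) = 1 := by
    rw [← rpow_add hcp, add_neg_cancel, rpow_zero]
  calc L * x = (c * p) ^ p⁻¹ * x * (L * (c * p) ^ (-p⁻¹)) := by
        linear_combination (-(L * x)) * hcancel
    _ ≤ ((c * p) ^ p⁻¹ * x) ^ p / p + (L * (c * p) ^ (-p⁻¹)) ^ q / q := young
    _ = c * x ^ p + L ^ q * (c * p) ^ (-(q / p)) / q := by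
        rw [mul_rpow (rpow_nonneg hcp.le _) hx, mul_rpow hL (rpow_nonneg hcp.le _),
          ← rpow_mul hcp.le, ← rpow_mul hcp.le, inv_mul_cancel₀ hpq.ne_zero, rpow_one]
        field_simp [hpq.ne_zero]

theorem pow_mul_exp_neg_le_s13 {Δ g K : ℝ} {r : ℕ} (hΔ : 0 < Δ)
    (h : (log Δ + 1) * r ≤ g + K) : Δ ^ r * exp (-g) ≤ exp K * exp (-1) ^ r := by
  rw [← exp_log hΔ, ← exp_nat_mul, ← exp_nat_mul, ← exp_add, ← exp_add, exp_le_exp]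
  linarith

theorem summable_and_tsum_le_of_le_geometric {f : ℕ → ℝ} {K ρ : ℝ}
    (hf₀ : ∀ n, 0 ≤ f n) (hρ₀ : 0 ≤ ρ) (hρ₁ : ρ < 1) (hf : ∀ n, f n ≤ K * ρ ^ n) :
    Summable f ∧ ∑' n, f n ≤ K * (1 - ρ)⁻¹ := by
  have hgeom := (summable_geometric_of_lt_one hρ₀ hρ₁).mul_left K
  have hsum := hgeom.of_nonneg_of_le hf₀ hf
  refine ⟨hsum, ?_⟩
  rw [← tsum_geometric_of_lt_one hρ₀ hρ₁, ← tsum_mul_left]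
  exact hsum.tsum_le_tsum hf hgeom

/-- Exponential-times-stretched-exponential sum bound (expander case).
For `Δ > 1`, `a > 0`, `0 < β < 1`, there are constants `C₁ C₂ > 0` (depending only on
`Δ, a, β`) such that for every `δ > 0` the series
`Σ_{r=0}^∞ Δ^r · exp(−a·δ·r^{1/(1−β)})` converges and is at most
`C₂ · exp(C₁ · δ^{−(1−β)/β})`. -/
theorem stretched_exponential_sum_bound_expander
    (Δ a β : ℝ) (hΔ : 1 < Δ) (ha : 0 < a) (hβ0 : 0 < β) (hβ1 : β < 1) :
    ∃ C₁ C₂ : ℝ, 0 < C₁ ∧ 0 < C₂ ∧ ∀ δ : ℝ, 0 < δ →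
      Summable (fun r : ℕ => Δ ^ r * Real.exp (-(a * δ * (r : ℝ) ^ (1 / (1 - β))))) ∧
      (∑' r : ℕ, Δ ^ r * Real.exp (-(a * δ * (r : ℝ) ^ (1 / (1 - β)))))
        ≤ C₂ * Real.exp (C₁ * δ ^ (-((1 - β) / β))) := by
  set p := 1 / (1 - β)
  set q := 1 / β
  have hpq : p.HolderConjugate q := by
    simpa only [p, q, one_div] using HolderConjugate.one_sub_inv_inv hβ0 hβ1
  have hqp : q / p = (1 - β) / β := by simp only [p, q]; field_simp
  set L := log Δ + 1
  have hL : 0 < L := by have := log_pos hΔ; positivity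
  refine ⟨L ^ q / q * (a * p) ^ (-(q / p)), (1 - exp (-1))⁻¹,
    by have := hpq.pos; have := hpq.symm.pos; positivity,
    inv_pos.2 (sub_pos.2 (exp_lt_one_iff.2 (by norm_num))), fun δ hδ => ?_⟩
  have hterm (r : ℕ) : Δ ^ r * exp (-(a * δ * (r : ℝ) ^ p))
      ≤ exp (L ^ q / q * (a * p) ^ (-(q / p)) * δ ^ (-((1 - β) / β))) * exp (-1) ^ r := by
    refine pow_mul_exp_neg_le_s13 (by linarith) ?_
    have hscale : (a * δ * p) ^ (-(q / p)) = (a * p) ^ (-(q / p)) * δ ^ (-((1 - β) / β)) := by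
      rw [mul_right_comm, mul_rpow (by have := hpq.pos; positivity) hδ.le, hqp]
    refine (mul_le_rpow_add_of_holderConjugate hpq hL.le (mul_pos ha hδ)
      r.cast_nonneg).trans_eq ?_
    rw [hscale]
    ring
  obtain ⟨hsum, hle⟩ := summable_and_tsum_le_of_le_geometric (fun r => by positivity)
    (exp_pos _).le (exp_lt_one_iff.2 (by norm_num)) hterm
  exact ⟨hsum, hle.trans_eq (mul_comm _ _)⟩
end

section
/- Commutator bound for weighted local-norm decompositions: Let Λ be a finite set and N ≥ 1. For each subset S ⊆ Λ let D_S and A_S be N×N complex matrices, and suppose the commutator [D_{S'}, A_S] = 0 whenever S' ∩ S = ∅. For κ > 0 define N_κ(D) := max over i ∈ Λ of Σ_{S' ∋ i} ‖D_{S'}‖·e^{κ|S'|}, and similarly N_κ(A), where ‖·‖ is the ℓ²→ℓ² operator norm. Then for all 0 < κ' < κ, setting δκ := κ − κ': max over i ∈ Λ of Σ over pairs (S, S') of subsets of Λ with S ∩ S' ≠ ∅ and i ∈ S ∪ S' of ‖[D_{S'}, A_S]‖·e^{κ'·|S ∪ S'|} is at most (2/δκ)·N_κ(D)·N_κ(A).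 In particular, for the operator [ΣD_{S'}, ΣA_S] decomposed by assigning each commutator [D_{S'}, A_S] to the union set S ∪ S', the resulting κ'-norm is at most (2/δκ)·N_κ(D)·N_κ(A). -/
noncomputable section

/-- The `ℓ² → ℓ²` operator norm of a square complex matrix. -/
def matOpNorm {N : ℕ} (M : Matrix (Fin N) (Fin N) ℂ) : ℝ :=
  ‖Matrix.toEuclideanCLM (𝕜 := ℂ) M‖

/-- The `κ`-norm of a family of matrices indexed by subsets of `Λ`:
`max_{i ∈ Λ} Σ_{S ∋ i} ‖D_S‖·e^{κ|S|}`. -/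
def locNorm {Λ : Type*} [Fintype Λ] [DecidableEq Λ] {N : ℕ}
    (κ : ℝ) (D : Finset Λ → Matrix (Fin N) (Fin N) ℂ) : ℝ :=
  ⨆ i : Λ, ∑ S ∈ Finset.univ.filter (fun S : Finset Λ => i ∈ S),
    matOpNorm (D S) * Real.exp (κ * S.card)

lemma matOpNorm_nonneg {N : ℕ} (M : Matrix (Fin N) (Fin N) ℂ) : 0 ≤ matOpNorm M :=
  norm_nonneg _

lemma matOpNorm_comm_le {N : ℕ} (M₁ M₂ : Matrix (Fin N) (Fin N) ℂ) :
    matOpNorm (M₁ * M₂ - M₂ * M₁) ≤ 2 * (matOpNorm M₁ * matOpNorm M₂) := by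
  unfold matOpNorm
  rw [map_sub, map_mul, map_mul]
  have h1 := norm_mul_le (Matrix.toEuclideanCLM (𝕜 := ℂ) M₁) (Matrix.toEuclideanCLM (𝕜 := ℂ) M₂)
  have h2 := norm_mul_le (Matrix.toEuclideanCLM (𝕜 := ℂ) M₂) (Matrix.toEuclideanCLM (𝕜 := ℂ) M₁)
  have h3 := norm_sub_le (Matrix.toEuclideanCLM (𝕜 := ℂ) M₁ * Matrix.toEuclideanCLM (𝕜 := ℂ) M₂)
      (Matrix.toEuclideanCLM (𝕜 := ℂ) M₂ * Matrix.toEuclideanCLM (𝕜 := ℂ) M₁)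
  nlinarith [h1, h2, h3]

lemma exp_linear_aux {δ x : ℝ} (hx : 0 ≤ x) :
    Real.exp 1 * δ * x ≤ Real.exp (δ * x) := by
  have h1 := Real.add_one_le_exp (δ * x - 1)
  have h2 : Real.exp (δ * x - 1) * Real.exp 1 = Real.exp (δ * x) := by
    rw [← Real.exp_add]; ring_nf
  have h3 := mul_le_mul_of_nonneg_right h1 (Real.exp_pos 1).le
  rw [h2] at h3
  nlinarith [h3, hx]

/-- Generic double-counting bound: a sum over sets `S` satisfying a predicate that forces
`S` to meet `T` is at most `|T|` times a uniform bound on sums over sets containing a point. -/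
lemma meet_sum_le {Λ : Type*} [Fintype Λ] [DecidableEq Λ]
    (T : Finset Λ) (P : Finset Λ → Prop) [DecidablePred P] (F : Finset Λ → ℝ) (C : ℝ)
    (hF : ∀ S, 0 ≤ F S) (hP : ∀ S, P S → ∃ j ∈ T, j ∈ S)
    (hC : ∀ j : Λ, ∑ S ∈ Finset.univ.filter (fun S : Finset Λ => j ∈ S), F S ≤ C) :
    ∑ S ∈ Finset.univ, (if P S then F S else 0) ≤ T.card * C := by
  calc ∑ S ∈ Finset.univ, (if P S then F S else 0)
      ≤ ∑ S ∈ Finset.univ, ∑ j ∈ T, (if j ∈ S then F S else 0) := by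
        apply Finset.sum_le_sum
        intro S _
        by_cases h : P S
        · obtain ⟨j₀, hj₀T, hj₀S⟩ := hP S h
          rw [if_pos h]
          calc F S = (if j₀ ∈ S then F S else 0) := by rw [if_pos hj₀S]
            _ ≤ ∑ j ∈ T, (if j ∈ S then F S else 0) := by
                apply Finset.single_le_sum (f := fun j => if j ∈ S then F S else 0)
                  (fun j _ => by
                    split_ifs with hh
                    · exact hF S
                    · exact le_refl 0) hj₀T
        · rw [if_neg h]
          apply Finset.sum_nonneg
          intro j _
          split_ifs
          · exact hF S
          · exact le_refl 0
    _ = ∑ j ∈ T, ∑ S ∈ Finset.univ, (if j ∈ S then F S else 0) := Finset.sum_comm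
    _ = ∑ j ∈ T, ∑ S ∈ Finset.univ.filter (fun S : Finset Λ => j ∈ S), F S := by
        exact Finset.sum_congr rfl fun j _ => (Finset.sum_filter _ _).symm
    _ ≤ ∑ j ∈ T, C := Finset.sum_le_sum fun j _ => hC j
    _ = T.card * C := by rw [Finset.sum_const, nsmul_eq_mul]

set_option maxHeartbeats 2000000

/-- Commutator bound for weighted local-norm decompositions.  If
`[D_{S'}, A_S] = 0` whenever `S' ∩ S = ∅`, then for `0 < κ' < κ`, for every `i ∈ Λ`,
the sum over pairs `(S, S')` with `S ∩ S' ≠ ∅` and `i ∈ S ∪ S'` of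
`‖[D_{S'}, A_S]‖·e^{κ'|S ∪ S'|}` is at most `(2/(κ−κ'))·N_κ(D)·N_κ(A)`. -/
theorem commutator_kappa_norm_bound
    {Λ : Type*} [Fintype Λ] [DecidableEq Λ] (N : ℕ) (hN : 1 ≤ N)
    (D A : Finset Λ → Matrix (Fin N) (Fin N) ℂ)
    (hcomm : ∀ S S' : Finset Λ, S' ∩ S = ∅ → D S' * A S = A S * D S')
    (κ κ' : ℝ) (hκ' : 0 < κ') (hκ : κ' < κ) :
    ∀ i : Λ,
      (∑ p ∈ (Finset.univ ×ˢ Finset.univ).filter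
          (fun p : Finset Λ × Finset Λ => (p.1 ∩ p.2).Nonempty ∧ i ∈ p.1 ∪ p.2),
        matOpNorm (D p.2 * A p.1 - A p.1 * D p.2) * Real.exp (κ' * (p.1 ∪ p.2).card))
      ≤ (2 / (κ - κ')) * locNorm κ D * locNorm κ A := by
  intro i
  have hδ : 0 < κ - κ' := sub_pos.2 hκ
  set E := Real.exp 1 with hE
  have hE2 : (2:ℝ) ≤ E := by
    have := Real.add_one_le_exp 1; linarith
  have hEpos : 0 < E := Real.exp_pos 1
  -- abbreviations
  set nd := locNorm κ D with hnd
  set na := locNorm κ A with hna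
  -- the per-site sums are bounded by the locNorms
  have hbddD : BddAbove (Set.range fun j : Λ =>
      ∑ S ∈ Finset.univ.filter (fun S : Finset Λ => j ∈ S),
        matOpNorm (D S) * Real.exp (κ * S.card)) := Set.Finite.bddAbove (Set.finite_range _)
  have hbddA : BddAbove (Set.range fun j : Λ =>
      ∑ S ∈ Finset.univ.filter (fun S : Finset Λ => j ∈ S),
        matOpNorm (A S) * Real.exp (κ * S.card)) := Set.Finite.bddAbove (Set.finite_range _)
  have hsumDκ : ∀ j : Λ, ∑ S ∈ Finset.univ.filter (fun S : Finset Λ => j ∈ S),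
      matOpNorm (D S) * Real.exp (κ * S.card) ≤ nd := fun j => le_ciSup hbddD j
  have hsumAκ : ∀ j : Λ, ∑ S ∈ Finset.univ.filter (fun S : Finset Λ => j ∈ S),
      matOpNorm (A S) * Real.exp (κ * S.card) ≤ na := fun j => le_ciSup hbddA j
  have hmono : ∀ S : Finset Λ, Real.exp (κ' * S.card) ≤ Real.exp (κ * S.card) := by
    intro S
    apply Real.exp_le_exp.2
    have : (0:ℝ) ≤ (S.card : ℝ) := Nat.cast_nonneg _
    nlinarith [hκ.le]
  have hsumD : ∀ j : Λ, ∑ S ∈ Finset.univ.filter (fun S : Finset Λ => j ∈ S),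
      matOpNorm (D S) * Real.exp (κ' * S.card) ≤ nd := by
    intro j
    refine le_trans (Finset.sum_le_sum fun S _ => ?_) (hsumDκ j)
    exact mul_le_mul_of_nonneg_left (hmono S) (matOpNorm_nonneg _)
  have hsumA : ∀ j : Λ, ∑ S ∈ Finset.univ.filter (fun S : Finset Λ => j ∈ S),
      matOpNorm (A S) * Real.exp (κ' * S.card) ≤ na := by
    intro j
    refine le_trans (Finset.sum_le_sum fun S _ => ?_) (hsumAκ j)
    exact mul_le_mul_of_nonneg_left (hmono S) (matOpNorm_nonneg _)
  have hnd0 : 0 ≤ nd := le_trans (Finset.sum_nonneg fun S _ =>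
      mul_nonneg (matOpNorm_nonneg _) (Real.exp_pos _).le) (hsumDκ i)
  have hna0 : 0 ≤ na := le_trans (Finset.sum_nonneg fun S _ =>
      mul_nonneg (matOpNorm_nonneg _) (Real.exp_pos _).le) (hsumAκ i)
  -- the pointwise bound B
  have hB0 : ∀ S S' : Finset Λ, 0 ≤ (2 * matOpNorm (A S) * Real.exp (κ' * S.card)) *
      (matOpNorm (D S') * Real.exp (κ' * S'.card)) := fun S S' =>
    mul_nonneg (mul_nonneg (mul_nonneg (by norm_num) (matOpNorm_nonneg _)) (Real.exp_pos _).le)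
      (mul_nonneg (matOpNorm_nonneg _) (Real.exp_pos _).le)
  -- the exponential trade-off
  have hxexp : ∀ S : Finset Λ, (S.card : ℝ) * Real.exp (κ' * S.card) * (E * (κ - κ'))
      ≤ Real.exp (κ * S.card) := by
    intro S
    have hx : (0:ℝ) ≤ (S.card : ℝ) := Nat.cast_nonneg _
    have h1 : E * (κ - κ') * (S.card : ℝ) ≤ Real.exp ((κ - κ') * S.card) := exp_linear_aux hx
    have h2 : Real.exp ((κ - κ') * S.card) * Real.exp (κ' * S.card) = Real.exp (κ * S.card) := by
      rw [← Real.exp_add]; ring_nf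
    nlinarith [mul_le_mul_of_nonneg_right h1 (Real.exp_pos (κ' * (S.card : ℝ))).le, h2]
  calc (∑ p ∈ (Finset.univ ×ˢ Finset.univ).filter
          (fun p : Finset Λ × Finset Λ => (p.1 ∩ p.2).Nonempty ∧ i ∈ p.1 ∪ p.2),
        matOpNorm (D p.2 * A p.1 - A p.1 * D p.2) * Real.exp (κ' * (p.1 ∪ p.2).card))
      = ∑ S ∈ Finset.univ, ∑ S' ∈ Finset.univ,
          (if ((S ∩ S').Nonempty ∧ i ∈ S ∪ S') then
            matOpNorm (D S' * A S - A S * D S') * Real.exp (κ' * (S ∪ S').card) else 0) := by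
        rw [Finset.sum_filter, Finset.sum_product]
    _ ≤ ∑ S ∈ Finset.univ, ∑ S' ∈ Finset.univ,
          ((if (i ∈ S ∧ (S ∩ S').Nonempty) then
              (2 * matOpNorm (A S) * Real.exp (κ' * S.card)) *
                (matOpNorm (D S') * Real.exp (κ' * S'.card)) else 0)
           + (if (i ∈ S' ∧ (S ∩ S').Nonempty) then
              (2 * matOpNorm (A S) * Real.exp (κ' * S.card)) *
                (matOpNorm (D S') * Real.exp (κ' * S'.card)) else 0)) := by
        apply Finset.sum_le_sum; intro S _
        apply Finset.sum_le_sum; intro S' _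
        have hg : matOpNorm (D S' * A S - A S * D S') * Real.exp (κ' * (S ∪ S').card)
            ≤ (2 * matOpNorm (A S) * Real.exp (κ' * S.card)) *
                (matOpNorm (D S') * Real.exp (κ' * S'.card)) := by
          have h1 := matOpNorm_comm_le (D S') (A S)
          have h2 : Real.exp (κ' * (S ∪ S').card)
              ≤ Real.exp (κ' * S.card) * Real.exp (κ' * S'.card) := by
            rw [← Real.exp_add]
            apply Real.exp_le_exp.2
            have hc : ((S ∪ S').card : ℝ) ≤ (S.card : ℝ) + (S'.card : ℝ) := by
              exact_mod_cast Finset.card_union_le S S'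
            nlinarith [hκ'.le]
          calc matOpNorm (D S' * A S - A S * D S') * Real.exp (κ' * (S ∪ S').card)
              ≤ (2 * (matOpNorm (D S') * matOpNorm (A S))) *
                  (Real.exp (κ' * S.card) * Real.exp (κ' * S'.card)) := by
                apply mul_le_mul h1 h2 (Real.exp_pos _).le
                nlinarith [matOpNorm_nonneg (D S'), matOpNorm_nonneg (A S)]
            _ = (2 * matOpNorm (A S) * Real.exp (κ' * S.card)) *
                  (matOpNorm (D S') * Real.exp (κ' * S'.card)) := by ring
        have hb := hB0 S S'
        by_cases hc : ((S ∩ S').Nonempty ∧ i ∈ S ∪ S')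
        · rw [if_pos hc]
          rcases Finset.mem_union.1 hc.2 with hi | hi
          · rw [if_pos (show i ∈ S ∧ (S ∩ S').Nonempty from ⟨hi, hc.1⟩)]
            have : (0:ℝ) ≤ (if (i ∈ S' ∧ (S ∩ S').Nonempty) then
                (2 * matOpNorm (A S) * Real.exp (κ' * S.card)) *
                  (matOpNorm (D S') * Real.exp (κ' * S'.card)) else 0) := by
              split_ifs
              · exact hb
              · exact le_refl 0
            linarith
          · rw [if_pos (show i ∈ S' ∧ (S ∩ S').Nonempty from ⟨hi, hc.1⟩)]
            have : (0:ℝ) ≤ (if (i ∈ S ∧ (S ∩ S').Nonempty) then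
                (2 * matOpNorm (A S) * Real.exp (κ' * S.card)) *
                  (matOpNorm (D S') * Real.exp (κ' * S'.card)) else 0) := by
              split_ifs
              · exact hb
              · exact le_refl 0
            linarith
        · rw [if_neg hc]
          have l1 : (0:ℝ) ≤ (if (i ∈ S ∧ (S ∩ S').Nonempty) then
              (2 * matOpNorm (A S) * Real.exp (κ' * S.card)) *
                (matOpNorm (D S') * Real.exp (κ' * S'.card)) else 0) := by
            split_ifs
            · exact hb
            · exact le_refl 0
          have l2 : (0:ℝ) ≤ (if (i ∈ S' ∧ (S ∩ S').Nonempty) then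
              (2 * matOpNorm (A S) * Real.exp (κ' * S.card)) *
                (matOpNorm (D S') * Real.exp (κ' * S'.card)) else 0) := by
            split_ifs
            · exact hb
            · exact le_refl 0
          linarith
    _ = (∑ S ∈ Finset.univ, ∑ S' ∈ Finset.univ,
          (if (i ∈ S ∧ (S ∩ S').Nonempty) then
              (2 * matOpNorm (A S) * Real.exp (κ' * S.card)) *
                (matOpNorm (D S') * Real.exp (κ' * S'.card)) else 0))
        + (∑ S ∈ Finset.univ, ∑ S' ∈ Finset.univ,
          (if (i ∈ S' ∧ (S ∩ S').Nonempty) then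
              (2 * matOpNorm (A S) * Real.exp (κ' * S.card)) *
                (matOpNorm (D S') * Real.exp (κ' * S'.card)) else 0)) := by
        rw [← Finset.sum_add_distrib]
        exact Finset.sum_congr rfl fun S _ => Finset.sum_add_distrib
    _ ≤ (2 / (E * (κ - κ')) * nd * na) + (2 / (E * (κ - κ')) * nd * na) := by
        apply add_le_add
        · -- case i ∈ S
          calc ∑ S ∈ Finset.univ, ∑ S' ∈ Finset.univ,
                (if (i ∈ S ∧ (S ∩ S').Nonempty) then
                  (2 * matOpNorm (A S) * Real.exp (κ' * S.card)) *
                    (matOpNorm (D S') * Real.exp (κ' * S'.card)) else 0)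
              ≤ ∑ S ∈ Finset.univ,
                (if i ∈ S then
                  (2 * matOpNorm (A S) * Real.exp (κ' * S.card)) * (S.card * nd) else 0) := by
                apply Finset.sum_le_sum
                intro S _
                by_cases hi : i ∈ S
                · simp only [hi, true_and, if_pos]
                  calc ∑ S' ∈ Finset.univ, (if (S ∩ S').Nonempty then
                        (2 * matOpNorm (A S) * Real.exp (κ' * S.card)) *
                          (matOpNorm (D S') * Real.exp (κ' * S'.card)) else 0)
                      = (2 * matOpNorm (A S) * Real.exp (κ' * S.card)) *
                          ∑ S' ∈ Finset.univ, (if (S ∩ S').Nonempty then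
                            matOpNorm (D S') * Real.exp (κ' * S'.card) else 0) := by
                        rw [Finset.mul_sum]
                        exact Finset.sum_congr rfl fun S' _ => by split_ifs <;> ring
                    _ ≤ (2 * matOpNorm (A S) * Real.exp (κ' * S.card)) * (S.card * nd) := by
                        apply mul_le_mul_of_nonneg_left _
                          (mul_nonneg (mul_nonneg (by norm_num) (matOpNorm_nonneg _))
                            (Real.exp_pos _).le)
                        apply meet_sum_le S (fun S' => (S ∩ S').Nonempty)
                          (fun S' => matOpNorm (D S') * Real.exp (κ' * S'.card)) nd
                          (fun S' => mul_nonneg (matOpNorm_nonneg _) (Real.exp_pos _).le)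
                          (fun S' h => by
                            obtain ⟨j, hj⟩ := h
                            exact ⟨j, (Finset.mem_inter.1 hj).1, (Finset.mem_inter.1 hj).2⟩)
                          hsumD
                · simp [hi]
            _ = ∑ S ∈ Finset.univ.filter (fun S : Finset Λ => i ∈ S),
                  (2 * matOpNorm (A S) * Real.exp (κ' * S.card)) * (S.card * nd) :=
                (Finset.sum_filter _ _).symm
            _ ≤ ∑ S ∈ Finset.univ.filter (fun S : Finset Λ => i ∈ S),
                  (2 / (E * (κ - κ')) * nd) * (matOpNorm (A S) * Real.exp (κ * S.card)) := by
                apply Finset.sum_le_sum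
                intro S _
                have h1 := hxexp S
                have h2 : (0:ℝ) ≤ 2 * matOpNorm (A S) * nd :=
                  mul_nonneg (mul_nonneg (by norm_num) (matOpNorm_nonneg _)) hnd0
                have h3 := mul_le_mul_of_nonneg_left h1 h2
                rw [div_mul_eq_mul_div, div_mul_eq_mul_div, le_div_iff₀ (mul_pos hEpos hδ)]
                nlinarith [h3]
            _ = (2 / (E * (κ - κ')) * nd) *
                  ∑ S ∈ Finset.univ.filter (fun S : Finset Λ => i ∈ S),
                    matOpNorm (A S) * Real.exp (κ * S.card) := by
                rw [Finset.mul_sum]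
            _ ≤ (2 / (E * (κ - κ')) * nd) * na := by
                exact mul_le_mul_of_nonneg_left (hsumAκ i)
                  (mul_nonneg (div_nonneg (by norm_num) (mul_pos hEpos hδ).le) hnd0)
            _ = 2 / (E * (κ - κ')) * nd * na := by ring
        · -- case i ∈ S'
          calc ∑ S ∈ Finset.univ, ∑ S' ∈ Finset.univ,
                (if (i ∈ S' ∧ (S ∩ S').Nonempty) then
                  (2 * matOpNorm (A S) * Real.exp (κ' * S.card)) *
                    (matOpNorm (D S') * Real.exp (κ' * S'.card)) else 0)
              = ∑ S' ∈ Finset.univ, ∑ S ∈ Finset.univ,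
                (if (i ∈ S' ∧ (S ∩ S').Nonempty) then
                  (2 * matOpNorm (A S) * Real.exp (κ' * S.card)) *
                    (matOpNorm (D S') * Real.exp (κ' * S'.card)) else 0) := Finset.sum_comm
            _ ≤ ∑ S' ∈ Finset.univ,
                (if i ∈ S' then
                  (matOpNorm (D S') * Real.exp (κ' * S'.card)) * (S'.card * (2 * na)) else 0) := by
                apply Finset.sum_le_sum
                intro S' _
                by_cases hi : i ∈ S'
                · simp only [hi, true_and, if_pos]
                  calc ∑ S ∈ Finset.univ, (if (S ∩ S').Nonempty then
                        (2 * matOpNorm (A S) * Real.exp (κ' * S.card)) *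
                          (matOpNorm (D S') * Real.exp (κ' * S'.card)) else 0)
                      = (matOpNorm (D S') * Real.exp (κ' * S'.card)) *
                          ∑ S ∈ Finset.univ, (if (S ∩ S').Nonempty then
                            2 * (matOpNorm (A S) * Real.exp (κ' * S.card)) else 0) := by
                        rw [Finset.mul_sum]
                        exact Finset.sum_congr rfl fun S _ => by split_ifs <;> ring
                    _ ≤ (matOpNorm (D S') * Real.exp (κ' * S'.card)) * (S'.card * (2 * na)) := by
                        apply mul_le_mul_of_nonneg_left _
                          (mul_nonneg (matOpNorm_nonneg _) (Real.exp_pos _).le)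
                        apply meet_sum_le S' (fun S => (S ∩ S').Nonempty)
                          (fun S => 2 * (matOpNorm (A S) * Real.exp (κ' * S.card))) (2 * na)
                          (fun S => mul_nonneg (by norm_num)
                            (mul_nonneg (matOpNorm_nonneg _) (Real.exp_pos _).le))
                          (fun S h => by
                            obtain ⟨j, hj⟩ := h
                            exact ⟨j, (Finset.mem_inter.1 hj).2, (Finset.mem_inter.1 hj).1⟩)
                          (fun j => by
                            rw [← Finset.mul_sum]
                            exact mul_le_mul_of_nonneg_left (hsumA j) (by norm_num))
                · simp [hi]
            _ = ∑ S' ∈ Finset.univ.filter (fun S' : Finset Λ => i ∈ S'),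
                  (matOpNorm (D S') * Real.exp (κ' * S'.card)) * (S'.card * (2 * na)) :=
                (Finset.sum_filter _ _).symm
            _ ≤ ∑ S' ∈ Finset.univ.filter (fun S' : Finset Λ => i ∈ S'),
                  (2 / (E * (κ - κ')) * na) * (matOpNorm (D S') * Real.exp (κ * S'.card)) := by
                apply Finset.sum_le_sum
                intro S' _
                have h1 := hxexp S'
                have h2 : (0:ℝ) ≤ 2 * matOpNorm (D S') * na :=
                  mul_nonneg (mul_nonneg (by norm_num) (matOpNorm_nonneg _)) hna0
                have h3 := mul_le_mul_of_nonneg_left h1 h2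
                rw [div_mul_eq_mul_div, div_mul_eq_mul_div, le_div_iff₀ (mul_pos hEpos hδ)]
                nlinarith [h3]
            _ = (2 / (E * (κ - κ')) * na) *
                  ∑ S' ∈ Finset.univ.filter (fun S' : Finset Λ => i ∈ S'),
                    matOpNorm (D S') * Real.exp (κ * S'.card) := by
                rw [Finset.mul_sum]
            _ ≤ (2 / (E * (κ - κ')) * na) * nd := by
                exact mul_le_mul_of_nonneg_left (hsumDκ i)
                  (mul_nonneg (div_nonneg (by norm_num) (mul_pos hEpos hδ).le) hna0)
            _ = 2 / (E * (κ - κ')) * nd * na := by ring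
    _ ≤ (2 / (κ - κ')) * nd * na := by
        have h46 : 4 / (E * (κ - κ')) ≤ 2 / (κ - κ') := by
          rw [div_le_div_iff₀ (mul_pos hEpos hδ) hδ]
          nlinarith
        have : 2 / (E * (κ - κ')) * nd * na + 2 / (E * (κ - κ')) * nd * na
            = (4 / (E * (κ - κ'))) * (nd * na) := by ring
        rw [this]
        calc (4 / (E * (κ - κ'))) * (nd * na) ≤ (2 / (κ - κ')) * (nd * na) :=
              mul_le_mul_of_nonneg_right h46 (mul_nonneg hnd0 hna0)
          _ = (2 / (κ - κ')) * nd * na := by ring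
end
end

section
/- Spectral stability of a gapped Hamiltonian under a relatively bounded block-diagonal term plus a small perturbation: Let E be a finite-dimensional complex inner product space. Let H₀ be a positive-semidefinite self-adjoint operator on E, let P be the orthogonal projection onto the kernel of H₀, with rank P = K, and suppose ⟨ψ, H₀ψ⟩ ≥ ‖(I − P)ψ‖² for all ψ ∈ E (i.e., the spectrum of H₀ is contained in {0} ∪ [1, ∞)). Let D be self-adjoint with ‖Dψ‖ ≤ δ·‖H₀ψ‖ for all ψ ∈ E, where δ ≤ 1/3, and let V be self-adjoint with ‖V‖ ≤ ε_*, where ε_* ≤ 1/18. Then: (i) every eigenvalue of H := H₀ + D + V lies in [−ε_*, ε_*] ∪ [1 − δ − ε_*, ∞), and exactly K eigenvalues, counted with multiplicity, lie in [−ε_*, ε_*]; (ii) letting P_new denote the orthogonal projection onto the span of the eigenvectors of H with eigenvalue in [−ε_*, ε_*], one has ‖P_new − P‖ ≤ 4·√(ε_*). -/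
/-!
Call an orthogonal projection `Q` a low-energy projection of `H` if the energy `re ⟪x, H x⟫` is
at most `ε ‖x‖²` on its range and at least `γ ‖x - Q x‖² - ε ‖x‖²` everywhere. With `γ = 1 - δ`,
the kernel projection `P` is one for `H = H₀ + D + V`: the relative bound on `D` keeps the nonzero
eigenvalues of `H₀ + D` above `1 - δ` and leaves its kernel equal to `ker H₀`, and `V` moves
energies by at most `ε`. The spectral projection `P_new` is one as well, because (a Weyl-type
estimate) every eigenvalue of `H` lies within `ε` of an eigenvalue of `H₀ + D`. Two low-energy
projections are close: a vector in the range of one has a component of relative size at most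
`√(2ε/γ)` outside the other. This gives the equality of ranks and
`‖P_new - P‖ ≤ 2 √(2ε/(1-δ)) ≤ 4 √ε`.
-/

open scoped InnerProductSpace

section

open Module.End RCLike

theorem Submodule.finrank_le_finrank_range_of_disjoint_ker {K V W : Type*} [DivisionRing K]
    [AddCommGroup V] [Module K V] [AddCommGroup W] [Module K W] [FiniteDimensional K V]
    [FiniteDimensional K W] {U : Submodule K V} {f : V →ₗ[K] W}
    (h : Disjoint U (LinearMap.ker f)) :
    Module.finrank K U ≤ Module.finrank K (LinearMap.range f) := by
  rw [← LinearMap.finrank_range_of_inj (LinearMap.injective_domRestrict_iff.mpr h)]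
  exact Submodule.finrank_mono (LinearMap.range_domRestrict_le_range f U)

variable {𝕜 E : Type*} [RCLike 𝕜] [NormedAddCommGroup E] [InnerProductSpace 𝕜 E]

theorem ContinuousLinearMap.abs_re_inner_apply_self_le (V : E →L[𝕜] E) (x : E) :
    |re ⟪x, V x⟫_𝕜| ≤ ‖V‖ * ‖x‖ ^ 2 := calc
  |re ⟪x, V x⟫_𝕜| ≤ ‖⟪x, V x⟫_𝕜‖ := abs_re_le_norm _
  _ ≤ ‖x‖ * (‖V‖ * ‖x‖) := (norm_inner_le_norm _ _).trans (by gcongr; exact V.le_opNorm x)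
  _ = ‖V‖ * ‖x‖ ^ 2 := by ring

theorem ContinuousLinearMap.ker_add_eq_ker_of_norm_le {H₀ D : E →L[𝕜] E} {δ : ℝ}
    (hD : ∀ x, ‖D x‖ ≤ δ * ‖H₀ x‖) (hδ : δ < 1) :
    LinearMap.ker ((H₀ + D : E →L[𝕜] E) : E →ₗ[𝕜] E) = LinearMap.ker (H₀ : E →ₗ[𝕜] E) := by
  ext x
  simp only [LinearMap.mem_ker, ContinuousLinearMap.coe_coe, add_apply]
  constructor
  · intro h
    have : ‖H₀ x‖ ≤ δ * ‖H₀ x‖ := calc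
      ‖H₀ x‖ = ‖D x‖ := by rw [eq_neg_of_add_eq_zero_left h, norm_neg]
      _ ≤ δ * ‖H₀ x‖ := hD x
    exact norm_le_zero_iff.mp (by nlinarith [norm_nonneg (H₀ x)])
  · intro h
    simpa [h] using hD x

theorem one_sub_le_of_apply_add_eq_smul {H₀ D : E →L[𝕜] E} {δ ν : ℝ} {g : E} (hg : g ≠ 0)
    (hgap : ‖g‖ ^ 2 ≤ re ⟪g, H₀ g⟫_𝕜) (hD : ‖D g‖ ≤ δ * ‖H₀ g‖) (hδ : δ < 1 / 2)
    (hν : H₀ g + D g = (ν : 𝕜) • g) : 1 - δ ≤ ν := by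
  set n := ‖g‖
  set a := ‖H₀ g‖
  have hn : 0 < n := norm_pos_iff.mpr hg
  have hna : n ≤ a := le_of_mul_le_mul_left
    (by nlinarith [hgap.trans ((re_le_norm _).trans (norm_inner_le_norm g (H₀ g)))]) hn
  have hδ0 : 0 ≤ δ := nonneg_of_mul_nonneg_left ((norm_nonneg _).trans hD) (hn.trans_le hna)
  have hνn : n - δ * a ≤ ν * n := by
    have hre : ν * n ^ 2 = re ⟪g, H₀ g⟫_𝕜 + re ⟪g, D g⟫_𝕜 := by
      rw [← map_add, ← inner_add_right, hν, inner_smul_right, inner_self_eq_norm_sq_to_K,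
        ← ofReal_pow, ← ofReal_mul, ofReal_re]
    have hDg : -(n * ‖D g‖) ≤ re ⟪g, D g⟫_𝕜 :=
      neg_le_of_abs_le ((abs_re_le_norm _).trans (norm_inner_le_norm _ _))
    nlinarith
  have haν : (1 - δ) * a ≤ |ν| * n := by
    have : a ≤ ‖(ν : 𝕜) • g‖ + ‖D g‖ := by
      rw [show a = ‖(ν : 𝕜) • g - D g‖ by rw [← eq_sub_of_add_eq hν]]
      exact norm_sub_le _ _
    rw [norm_smul, norm_ofReal] at this
    linarith
  rcases le_or_gt 0 ν with hν0 | hν0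
  · rw [abs_of_nonneg hν0] at haν
    nlinarith [mul_le_mul_of_nonneg_left haν hδ0]
  · rw [abs_of_neg hν0] at haν
    nlinarith [mul_le_mul_of_nonneg_left haν hδ0]

variable [CompleteSpace E]

structure IsLowEnergyProjection (H Q : E →L[𝕜] E) (γ ε : ℝ) : Prop where
  isStarProjection : IsStarProjection Q
  re_inner_le : ∀ x ∈ LinearMap.range (Q : E →ₗ[𝕜] E), re ⟪x, H x⟫_𝕜 ≤ ε * ‖x‖ ^ 2
  le_re_inner : ∀ x, γ * ‖x - Q x‖ ^ 2 - ε * ‖x‖ ^ 2 ≤ re ⟪x, H x⟫_𝕜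

namespace IsLowEnergyProjection

variable {H Q Q' V : E →L[𝕜] E} {γ ε ε' : ℝ}

theorem add (h : IsLowEnergyProjection H Q γ ε) (hV : ‖V‖ ≤ ε') :
    IsLowEnergyProjection (H + V) Q γ (ε + ε') where
  isStarProjection := h.isStarProjection
  re_inner_le x hx := by
    have := (abs_le.mp (V.abs_re_inner_apply_self_le x)).2
    have : ‖V‖ * ‖x‖ ^ 2 ≤ ε' * ‖x‖ ^ 2 := by gcongr
    rw [add_apply, inner_add_right, map_add]
    linarith [h.re_inner_le x hx]
  le_re_inner x := by
    have := (abs_le.mp (V.abs_re_inner_apply_self_le x)).1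
    have : ‖V‖ * ‖x‖ ^ 2 ≤ ε' * ‖x‖ ^ 2 := by gcongr
    rw [add_apply, inner_add_right, map_add]
    linarith [h.le_re_inner x]

theorem mul_norm_sub_apply_sq_le (h : IsLowEnergyProjection H Q γ ε)
    (h' : IsLowEnergyProjection H Q' γ ε) {x : E} (hx : x ∈ LinearMap.range (Q' : E →ₗ[𝕜] E)) :
    γ * ‖x - Q x‖ ^ 2 ≤ 2 * ε * ‖x‖ ^ 2 := by
  linarith [h.le_re_inner x, h'.re_inner_le x hx]

theorem disjoint_range_ker (h : IsLowEnergyProjection H Q γ ε)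
    (h' : IsLowEnergyProjection H Q' γ ε) (hγ : 2 * ε < γ) :
    Disjoint (LinearMap.range (Q' : E →ₗ[𝕜] E)) (LinearMap.ker (Q : E →ₗ[𝕜] E)) := by
  refine Submodule.disjoint_def.mpr fun x hx hQx => norm_eq_zero.mp <|
    pow_eq_zero_iff two_ne_zero |>.mp <| le_antisymm ?_ (sq_nonneg _)
  have := h.mul_norm_sub_apply_sq_le h' hx
  rw [show Q x = 0 from hQx, sub_zero] at this
  nlinarith

theorem finrank_range_eq [FiniteDimensional 𝕜 E] (h : IsLowEnergyProjection H Q γ ε)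
    (h' : IsLowEnergyProjection H Q' γ ε) (hγ : 2 * ε < γ) :
    Module.finrank 𝕜 (LinearMap.range (Q : E →ₗ[𝕜] E)) =
      Module.finrank 𝕜 (LinearMap.range (Q' : E →ₗ[𝕜] E)) :=
  le_antisymm (Submodule.finrank_le_finrank_range_of_disjoint_ker (h'.disjoint_range_ker h hγ))
    (Submodule.finrank_le_finrank_range_of_disjoint_ker (h.disjoint_range_ker h' hγ))

theorem norm_one_sub_mul_le (h : IsLowEnergyProjection H Q γ ε)
    (h' : IsLowEnergyProjection H Q' γ ε) (hγ : 0 < γ) :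
    ‖(1 - Q) * Q'‖ ≤ √(2 * ε / γ) := by
  refine ContinuousLinearMap.opNorm_le_bound _ (Real.sqrt_nonneg _) fun x => ?_
  set y := Q' x
  have hy : ‖y‖ ≤ ‖x‖ := (Q'.le_opNorm x).trans <|
    mul_le_of_le_one_left (norm_nonneg x) (h'.isStarProjection.norm_le Q')
  have hsq : ‖y - Q y‖ ^ 2 ≤ 2 * ε / γ * ‖y‖ ^ 2 := by
    rw [div_mul_eq_mul_div, le_div_iff₀ hγ, mul_comm]
    exact h.mul_norm_sub_apply_sq_le h' ⟨x, rfl⟩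
  calc ‖((1 - Q) * Q') x‖ = ‖y - Q y‖ := by simp [y]
    _ ≤ √(2 * ε / γ * ‖y‖ ^ 2) := Real.le_sqrt_of_sq_le hsq
    _ = √(2 * ε / γ) * ‖y‖ := by rw [Real.sqrt_mul' _ (by positivity), Real.sqrt_sq (norm_nonneg y)]
    _ ≤ √(2 * ε / γ) * ‖x‖ := by gcongr

theorem norm_sub_le (h : IsLowEnergyProjection H Q γ ε)
    (h' : IsLowEnergyProjection H Q' γ ε) (hγ : 0 < γ) :
    ‖Q' - Q‖ ≤ 2 * √(2 * ε / γ) := by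
  have hstar : star ((1 - Q') * Q) = Q * (1 - Q') := by
    rw [star_mul, star_sub, star_one, h.isStarProjection.isSelfAdjoint.star_eq,
      h'.isStarProjection.isSelfAdjoint.star_eq]
  calc ‖Q' - Q‖ = ‖(1 - Q) * Q' - Q * (1 - Q')‖ := by congr 1; noncomm_ring
    _ ≤ ‖(1 - Q) * Q'‖ + ‖Q * (1 - Q')‖ := _root_.norm_sub_le _ _
    _ = ‖(1 - Q) * Q'‖ + ‖(1 - Q') * Q‖ := by
      rw [← hstar, ContinuousLinearMap.star_eq_adjoint, LinearIsometryEquiv.norm_map]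
    _ ≤ 2 * √(2 * ε / γ) := by
      linarith [h.norm_one_sub_mul_le h' hγ, h'.norm_one_sub_mul_le h hγ]

end IsLowEnergyProjection

section Eigenbasis

variable {ι : Type*} [Fintype ι] {A : E →L[𝕜] E} {b : OrthonormalBasis ι 𝕜 E} {μ : ι → ℝ}

theorem IsSelfAdjoint.inner_eigenbasis_apply (hA : IsSelfAdjoint A)
    (hb : ∀ i, A (b i) = (μ i : 𝕜) • b i) (x : E) (i : ι) :
    ⟪b i, A x⟫_𝕜 = μ i * ⟪b i, x⟫_𝕜 := by
  rw [← ContinuousLinearMap.coe_coe, ← hA.isSymmetric, ContinuousLinearMap.coe_coe, hb,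
    inner_smul_left, conj_ofReal]

theorem IsSelfAdjoint.re_inner_apply_self_eq_sum (hA : IsSelfAdjoint A)
    (hb : ∀ i, A (b i) = (μ i : 𝕜) • b i) (x : E) :
    re ⟪x, A x⟫_𝕜 = ∑ i, μ i * ‖⟪b i, x⟫_𝕜‖ ^ 2 := by
  rw [← b.sum_inner_mul_inner, map_sum]
  refine Finset.sum_congr rfl fun i _ => ?_
  rw [hA.inner_eigenbasis_apply hb, ← inner_conj_symm, mul_left_comm, RCLike.conj_mul, ← ofReal_pow,
    ← ofReal_mul, ofReal_re]

theorem IsSelfAdjoint.norm_sub_smul_sq_eq_sum (hA : IsSelfAdjoint A)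
    (hb : ∀ i, A (b i) = (μ i : 𝕜) • b i) (x : E) (t : ℝ) :
    ‖A x - (t : 𝕜) • x‖ ^ 2 = ∑ i, (μ i - t) ^ 2 * ‖⟪b i, x⟫_𝕜‖ ^ 2 := by
  rw [← b.sum_sq_norm_inner_right]
  refine Finset.sum_congr rfl fun i _ => ?_
  rw [inner_sub_right, inner_smul_right, hA.inner_eigenbasis_apply hb, ← sub_mul, ← ofReal_sub,
    norm_mul, norm_ofReal, mul_pow, sq_abs]

end Eigenbasis

theorem IsSelfAdjoint.eq_zero_or_one_sub_le_of_hasEigenvalue {H₀ D P : E →L[𝕜] E} {δ : ℝ}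
    (hA : IsSelfAdjoint (H₀ + D)) (hP : IsStarProjection P)
    (hPker : LinearMap.range (P : E →ₗ[𝕜] E) = LinearMap.ker (H₀ : E →ₗ[𝕜] E))
    (hgap : ∀ ψ, ‖ψ - P ψ‖ ^ 2 ≤ re ⟪ψ, H₀ ψ⟫_𝕜) (hD : ∀ ψ, ‖D ψ‖ ≤ δ * ‖H₀ ψ‖)
    (hδ : δ < 1 / 2) {ν : ℝ} (hν : HasEigenvalue ((H₀ + D : E →L[𝕜] E) : E →ₗ[𝕜] E) ν) :
    ν = 0 ∨ 1 - δ ≤ ν := by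
  refine or_iff_not_imp_left.mpr fun hν0 => ?_
  obtain ⟨g, hg, hg0⟩ := hν.exists_hasEigenvector
  have hAg := mem_eigenspace_iff.mp hg
  have hg_range : g ∈ LinearMap.range ((H₀ + D : E →L[𝕜] E) : E →ₗ[𝕜] E) :=
    ⟨(ν⁻¹ : 𝕜) • g, by
      rw [map_smul, hAg, smul_smul, inv_mul_cancel₀ (by exact_mod_cast hν0), one_smul]⟩
  have hPg : g ∈ LinearMap.ker (P : E →ₗ[𝕜] E) := by
    rw [← hP.isSelfAdjoint.isSymmetric.orthogonal_range, hPker,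
      ← ContinuousLinearMap.ker_add_eq_ker_of_norm_le hD (by linarith),
      ← hA.isSymmetric.orthogonal_range]
    exact Submodule.le_orthogonal_orthogonal _ hg_range
  refine one_sub_le_of_apply_add_eq_smul hg0 ?_ (hD g) hδ hAg
  simpa [show P g = 0 from hPg] using hgap g

variable [FiniteDimensional 𝕜 E] {A V : E →L[𝕜] E}

theorem IsSelfAdjoint.exists_hasEigenvalue_near (hA : IsSelfAdjoint A) {ψ : E} (hψ : ψ ≠ 0)
    {t r : ℝ} (h : ‖A ψ - (t : 𝕜) • ψ‖ ≤ r * ‖ψ‖) :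
    ∃ ν : ℝ, HasEigenvalue (A : E →ₗ[𝕜] E) ν ∧ |ν - t| ≤ r := by
  by_contra! hfar
  have hψ' : 0 < ‖ψ‖ := norm_pos_iff.mpr hψ
  have hr : 0 ≤ r := nonneg_of_mul_nonneg_left ((norm_nonneg _).trans h) hψ'
  set b := hA.isSymmetric.eigenvectorBasis rfl
  set μ := hA.isSymmetric.eigenvalues rfl
  have hsep i : r ^ 2 < (μ i - t) ^ 2 := by
    simpa [sq_abs] using
      pow_lt_pow_left₀ (hfar _ (hA.isSymmetric.hasEigenvalue_eigenvalues rfl i)) hr two_ne_zero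
  obtain ⟨i, -, hi⟩ : ∃ i ∈ Finset.univ, (0 : ℝ) < ‖⟪b i, ψ⟫_𝕜‖ ^ 2 := by
    refine Finset.exists_lt_of_sum_lt ?_
    rw [b.sum_sq_norm_inner_right, Finset.sum_const_zero]
    positivity
  have key : (r * ‖ψ‖) ^ 2 < ‖A ψ - (t : 𝕜) • ψ‖ ^ 2 := calc
    (r * ‖ψ‖) ^ 2 = ∑ i, r ^ 2 * ‖⟪b i, ψ⟫_𝕜‖ ^ 2 := by
        rw [← Finset.mul_sum, b.sum_sq_norm_inner_right, mul_pow]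
    _ < ∑ i, (μ i - t) ^ 2 * ‖⟪b i, ψ⟫_𝕜‖ ^ 2 :=
        Finset.sum_lt_sum (fun i _ => by have := hsep i; gcongr)
          ⟨i, Finset.mem_univ _, mul_lt_mul_of_pos_right (hsep i) hi⟩
    _ = ‖A ψ - (t : 𝕜) • ψ‖ ^ 2 :=
        (hA.norm_sub_smul_sq_eq_sum (hA.isSymmetric.apply_eigenvectorBasis rfl) ψ t).symm
  exact key.not_ge (pow_le_pow_left₀ (norm_nonneg _) h 2)

theorem IsSelfAdjoint.exists_hasEigenvalue_near_of_hasEigenvalue_add (hA : IsSelfAdjoint A)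
    {ε : ℝ} (hV : ‖V‖ ≤ ε) {t : ℝ} (ht : HasEigenvalue ((A + V : E →L[𝕜] E) : E →ₗ[𝕜] E) t) :
    ∃ ν : ℝ, HasEigenvalue (A : E →ₗ[𝕜] E) ν ∧ |ν - t| ≤ ε := by
  obtain ⟨ψ, hψ, hψ0⟩ := ht.exists_hasEigenvector
  refine hA.exists_hasEigenvalue_near hψ0 ?_
  have hψt : A ψ - (t : 𝕜) • ψ = -V ψ := by
    rw [← mem_eigenspace_iff.mp hψ]
    simp
  rw [hψt, norm_neg]
  exact V.le_of_opNorm_le hV ψ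

theorem IsSelfAdjoint.isLowEnergyProjection {Q : E →L[𝕜] E} {γ ε : ℝ} (hA : IsSelfAdjoint A)
    (hQ : IsStarProjection Q)
    (hQA : LinearMap.range (Q : E →ₗ[𝕜] E) =
      ⨆ t ∈ Set.Icc (-ε) ε, eigenspace (A : E →ₗ[𝕜] E) (t : 𝕜))
    (hgap : ∀ t : ℝ, HasEigenvalue (A : E →ₗ[𝕜] E) t → t ∉ Set.Icc (-ε) ε → γ - ε ≤ t) :
    IsLowEnergyProjection A Q γ ε := by
  set b := hA.isSymmetric.eigenvectorBasis rfl
  set μ := hA.isSymmetric.eigenvalues rfl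
  have hb : ∀ i, A (b i) = (μ i : 𝕜) • b i := hA.isSymmetric.apply_eigenvectorBasis rfl
  have hout i (hi : μ i ∉ Set.Icc (-ε) ε) {y : E} (hy : y ∈ LinearMap.range (Q : E →ₗ[𝕜] E)) :
      ⟪b i, y⟫_𝕜 = 0 := by
    rw [hQA] at hy
    refine Submodule.mem_orthogonal_singleton_iff_inner_right.mp <|
      (iSup₂_le fun t ht x hx => ?_ : _ ≤ (𝕜 ∙ b i)ᗮ) hy
    rw [Submodule.mem_orthogonal_singleton_iff_inner_right]
    have h := hA.inner_eigenbasis_apply hb x i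
    rw [show A x = (t : 𝕜) • x from mem_eigenspace_iff.mp hx, inner_smul_right] at h
    have hne : (t : 𝕜) ≠ μ i := by exact_mod_cast fun (h : t = μ i) => hi (h ▸ ht)
    exact (mul_eq_mul_right_iff.mp h).resolve_left hne
  have hin i (hi : μ i ∈ Set.Icc (-ε) ε) (x : E) : ⟪b i, Q x⟫_𝕜 = ⟪b i, x⟫_𝕜 := by
    have hbQ : b i ∈ LinearMap.range (Q : E →ₗ[𝕜] E) := hQA ▸
      Submodule.mem_iSup_of_mem (μ i) (Submodule.mem_iSup_of_mem hi (mem_eigenspace_iff.mpr (hb i)))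
    obtain ⟨y, hy⟩ := hbQ
    have hQb : Q (b i) = b i := by rw [← hy]; exact congr($hQ.isIdempotentElem.eq y)
    rw [← ContinuousLinearMap.coe_coe, ← hQ.isSelfAdjoint.isSymmetric, ContinuousLinearMap.coe_coe,
      hQb]
  constructor
  · exact hQ
  · intro x hx
    rw [hA.re_inner_apply_self_eq_sum hb, ← b.sum_sq_norm_inner_right, Finset.mul_sum]
    refine Finset.sum_le_sum fun i _ => ?_
    by_cases hi : μ i ∈ Set.Icc (-ε) ε
    · exact mul_le_mul_of_nonneg_right hi.2 (sq_nonneg _)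
    · simp [hout i hi hx]
  · intro x
    have hcoeff i : ‖⟪b i, x - Q x⟫_𝕜‖ ^ 2 =
        if μ i ∈ Set.Icc (-ε) ε then 0 else ‖⟪b i, x⟫_𝕜‖ ^ 2 := by
      split_ifs with hi
      · simp [inner_sub_right, hin i hi]
      · rw [inner_sub_right, show ⟪b i, Q x⟫_𝕜 = 0 from hout i hi ⟨x, rfl⟩, sub_zero]
    rw [hA.re_inner_apply_self_eq_sum hb, ← b.sum_sq_norm_inner_right, ← b.sum_sq_norm_inner_right,
      Finset.mul_sum, Finset.mul_sum, ← Finset.sum_sub_distrib]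
    refine Finset.sum_le_sum fun i _ => ?_
    rw [hcoeff]
    split_ifs with hi
    · nlinarith [hi.1, sq_nonneg ‖⟪b i, x⟫_𝕜‖]
    · nlinarith [hgap _ (hA.isSymmetric.hasEigenvalue_eigenvalues rfl i) hi,
        sq_nonneg ‖⟪b i, x⟫_𝕜‖]

theorem IsSelfAdjoint.isLowEnergyProjection_of_range_eq_ker {P : E →L[𝕜] E} {γ : ℝ}
    (hA : IsSelfAdjoint A) (hP : IsStarProjection P)
    (hPA : LinearMap.range (P : E →ₗ[𝕜] E) = LinearMap.ker (A : E →ₗ[𝕜] E))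
    (hgap : ∀ t : ℝ, HasEigenvalue (A : E →ₗ[𝕜] E) t → t ≠ 0 → γ ≤ t) :
    IsLowEnergyProjection A P γ 0 :=
  hA.isLowEnergyProjection hP (by rw [hPA, ← eigenspace_zero]; simp) fun t ht h0 => by
    simpa using hgap t ht (by simpa using h0)

end

theorem spectral_stability_gapped_hamiltonian_general
    {E : Type*} [NormedAddCommGroup E] [InnerProductSpace ℂ E] [FiniteDimensional ℂ E]
    (H₀ D V P : E →L[ℂ] E) (K : ℕ) (δ εs : ℝ)
    (hH₀sa : IsSelfAdjoint H₀)
    (hPidem : P * P = P) (hPsa : IsSelfAdjoint P)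
    (hPker : LinearMap.range (P : E →ₗ[ℂ] E) = LinearMap.ker (H₀ : E →ₗ[ℂ] E))
    (hrank : Module.finrank ℂ (LinearMap.range (P : E →ₗ[ℂ] E)) = K)
    (hgap : ∀ ψ : E, ‖ψ - P ψ‖ ^ 2 ≤ (⟪ψ, H₀ ψ⟫_ℂ).re)
    (hDsa : IsSelfAdjoint D) (hD : ∀ ψ : E, ‖D ψ‖ ≤ δ * ‖H₀ ψ‖) (hδ : δ ≤ 1 / 3)
    (hVsa : IsSelfAdjoint V) (hV : ‖V‖ ≤ εs) (hεs : εs ≤ 1 / 18) :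
    (∀ μ : ℂ, Module.End.HasEigenvalue ((H₀ + D + V : E →L[ℂ] E) : E →ₗ[ℂ] E) μ →
        μ.im = 0 ∧ (μ.re ∈ Set.Icc (-εs) εs ∪ Set.Ici (1 - δ - εs))) ∧
    Module.finrank ℂ
      ↥(⨆ t : ℝ, ⨆ (_ : t ∈ Set.Icc (-εs) εs),
          Module.End.eigenspace ((H₀ + D + V : E →L[ℂ] E) : E →ₗ[ℂ] E) (t : ℂ)) = K ∧
    (∀ Pnew : E →L[ℂ] E, Pnew * Pnew = Pnew → IsSelfAdjoint Pnew →
      LinearMap.range (Pnew : E →ₗ[ℂ] E) =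
        (⨆ t : ℝ, ⨆ (_ : t ∈ Set.Icc (-εs) εs),
          Module.End.eigenspace ((H₀ + D + V : E →L[ℂ] E) : E →ₗ[ℂ] E) (t : ℂ)) →
      ‖Pnew - P‖ ≤ 4 * Real.sqrt εs) := by
  have hP : IsStarProjection P := ⟨hPidem, hPsa⟩
  have hA : IsSelfAdjoint (H₀ + D) := hH₀sa.add hDsa
  have hspecA {ν : ℝ} (hν : Module.End.HasEigenvalue ((H₀ + D : E →L[ℂ] E) : E →ₗ[ℂ] E) ν) :
      ν = 0 ∨ 1 - δ ≤ ν :=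
    hA.eq_zero_or_one_sub_le_of_hasEigenvalue hP hPker hgap hD (by linarith) hν
  have hspecH {t : ℝ} (ht : Module.End.HasEigenvalue ((H₀ + D + V : E →L[ℂ] E) : E →ₗ[ℂ] E) t) :
      t ∈ Set.Icc (-εs) εs ∪ Set.Ici (1 - δ - εs) := by
    obtain ⟨ν, hν, hνt⟩ := hA.exists_hasEigenvalue_near_of_hasEigenvalue_add hV ht
    rcases hspecA (ν := ν) hν with rfl | hν1
    · exact Or.inl (by simpa [abs_sub_comm, abs_le] using hνt)
    · exact Or.inr (Set.mem_Ici.mpr (by linarith [(abs_le.mp hνt).2]))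
  have hPlow : IsLowEnergyProjection (H₀ + D + V) P (1 - δ) εs := by
    simpa using (hA.isLowEnergyProjection_of_range_eq_ker hP
      (hPker.trans (ContinuousLinearMap.ker_add_eq_ker_of_norm_le hD (by linarith)).symm)
      fun t ht h0 => (hspecA (ν := t) ht).resolve_left h0).add hV
  have hlow {Q : E →L[ℂ] E} (hQ : IsStarProjection Q) (hQS : LinearMap.range (Q : E →ₗ[ℂ] E) =
      ⨆ t ∈ Set.Icc (-εs) εs,
        Module.End.eigenspace ((H₀ + D + V : E →L[ℂ] E) : E →ₗ[ℂ] E) (t : ℂ)) :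
      IsLowEnergyProjection (H₀ + D + V) Q (1 - δ) εs :=
    (hA.add hVsa).isLowEnergyProjection hQ hQS fun t ht hout => by
      simpa using (hspecH ht).resolve_left hout
  refine ⟨fun μ hμ => ?_, ?_, fun Pnew hPnew hPnewsa hPnewS => ?_⟩
  · have him : μ.im = 0 := Complex.conj_eq_iff_im.mp
      ((hA.add hVsa).isSymmetric.conj_eigenvalue_eq_self hμ)
    refine ⟨him, hspecH ?_⟩
    rwa [← Complex.conj_eq_iff_re.mp (Complex.conj_eq_iff_im.mpr him)] at hμ
  · rw [← hrank, ← Submodule.range_starProjection (⨆ t ∈ Set.Icc (-εs) εs, _)]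
    exact (hlow isStarProjection_starProjection (Submodule.range_starProjection _)).finrank_range_eq
      hPlow (by linarith)
  · calc ‖Pnew - P‖ ≤ 2 * √(2 * εs / (1 - δ)) :=
          hPlow.norm_sub_le (hlow ⟨hPnew, hPnewsa⟩ hPnewS) (by linarith)
      _ ≤ 2 * √(4 * εs) := by
        gcongr
        rw [div_le_iff₀ (by linarith)]
        nlinarith [(norm_nonneg V).trans hV]
      _ = 4 * √εs := by
        rw [Real.sqrt_mul (by norm_num), show (4 : ℝ) = 2 ^ 2 by norm_num,
          Real.sqrt_sq (by norm_num)]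
        ring

/-- Spectral stability of a gapped Hamiltonian under a relatively bounded
block-diagonal term plus a small perturbation.  `H₀ ≥ 0` with kernel projector `P` of
rank `K` and spectrum in `{0} ∪ [1, ∞)`, `‖Dψ‖ ≤ δ‖H₀ψ‖` with `δ ≤ 1/3`, and
`‖V‖ ≤ ε_* ≤ 1/18`.  Then all eigenvalues of `H = H₀ + D + V` are real and lie in
`[−ε_*, ε_*] ∪ [1 − δ − ε_*, ∞)`, the sum of the eigenspaces for eigenvalues in
`[−ε_*, ε_*]` has dimension `K`, and the orthogonal projection `P_new` onto it
satisfies `‖P_new − P‖ ≤ 4√ε_*`. -/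
theorem spectral_stability_gapped_hamiltonian
    {E : Type*} [NormedAddCommGroup E] [InnerProductSpace ℂ E] [FiniteDimensional ℂ E]
    (H₀ D V P : E →L[ℂ] E) (K : ℕ) (δ εs : ℝ)
    (hH₀sa : IsSelfAdjoint H₀)
    (hH₀pos : ∀ ψ : E, 0 ≤ (⟪ψ, H₀ ψ⟫_ℂ).re)
    (hPidem : P * P = P) (hPsa : IsSelfAdjoint P)
    (hPker : LinearMap.range (P : E →ₗ[ℂ] E) = LinearMap.ker (H₀ : E →ₗ[ℂ] E))
    (hrank : Module.finrank ℂ (LinearMap.range (P : E →ₗ[ℂ] E)) = K)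
    (hgap : ∀ ψ : E, ‖ψ - P ψ‖ ^ 2 ≤ (⟪ψ, H₀ ψ⟫_ℂ).re)
    (hDsa : IsSelfAdjoint D) (hD : ∀ ψ : E, ‖D ψ‖ ≤ δ * ‖H₀ ψ‖) (hδ : δ ≤ 1 / 3)
    (hVsa : IsSelfAdjoint V) (hV : ‖V‖ ≤ εs) (hεs : εs ≤ 1 / 18) :
    (∀ μ : ℂ, Module.End.HasEigenvalue ((H₀ + D + V : E →L[ℂ] E) : E →ₗ[ℂ] E) μ →
        μ.im = 0 ∧ (μ.re ∈ Set.Icc (-εs) εs ∪ Set.Ici (1 - δ - εs))) ∧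
    Module.finrank ℂ
      ↥(⨆ t : ℝ, ⨆ (_ : t ∈ Set.Icc (-εs) εs),
          Module.End.eigenspace ((H₀ + D + V : E →L[ℂ] E) : E →ₗ[ℂ] E) (t : ℂ)) = K ∧
    (∀ Pnew : E →L[ℂ] E, Pnew * Pnew = Pnew → IsSelfAdjoint Pnew →
      LinearMap.range (Pnew : E →ₗ[ℂ] E) =
        (⨆ t : ℝ, ⨆ (_ : t ∈ Set.Icc (-εs) εs),
          Module.End.eigenspace ((H₀ + D + V : E →L[ℂ] E) : E →ₗ[ℂ] E) (t : ℂ)) →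
      ‖Pnew - P‖ ≤ 4 * Real.sqrt εs) :=
  spectral_stability_gapped_hamiltonian_general H₀ D V P K δ εs hH₀sa hPidem hPsa hPker hrank hgap
    hDsa hD hδ hVsa hV hεs
end
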